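/- arXiv:1806.04031 — 5 statements merged into one kernel-verified Lean document; each statement's English description precedes it below -/
import Mathlib

section
/- Let M, A : ℝ → Mat(n×n, ℝ) be continuous with each A(τ) symmetric positive semidefinite, and let G₀ be a symmetric positive semidefinite n×n real matrix. Then the solution G(τ) of the Riccati matrix differential equation Ġ(τ) = −M(τ)ᵀG(τ) − G(τ)M(τ) − G(τ)A(τ)G(τ) with initial condition G(0) = G₀ exists for all τ ≥ 0 and is symmetric positive semidefinite for all τ ≥ 0. Furthermore, if G₀ is positive definite, then G(τ) is positive definite for all τ ≥ 0. -/
/-!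
Radon's linearization. If `(X, Y)` solves the linear Hamiltonian system `X' = M X + A Y`,
`Y' = -Mᵀ Y` with `X 0 = 1`, `Y 0 = G₀`, then `G = Y X⁻¹` solves the Riccati equation wherever `X`
is invertible, and the linear system has a global solution. The matrix `S = Xᵀ Y` satisfies
`S' = Yᵀ A Y ≥ 0`, so `S τ - G₀` is positive semidefinite for `τ ≥ 0`, and `G = X⁻ᵀ S X⁻¹` inherits
positive (semi)definiteness from `S`. Finally `X τ` stays invertible: if `X τ v = 0`, then
`t ↦ vᵀ S t v` increases from `vᵀ G₀ v ≥ 0` to `0` on `[0, τ]`, so it vanishes there and forces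
`A Y v = 0`; then `X v` solves `u' = M u` with `u τ = 0`, and backward uniqueness gives `v = 0`.
-/

open Matrix Set Topology
open scoped NNReal

theorem exists_forall_mem_Icc_nnnorm_le {F : Type*} [SeminormedAddCommGroup F] {f : ℝ → F}
    (hf : Continuous f) (a b : ℝ) : ∃ K : ℝ≥0, ∀ t ∈ Icc a b, ‖f t‖₊ ≤ K := by
  obtain ⟨K, hK⟩ := (isCompact_Icc.image (continuous_nnnorm.comp hf)).bddAbove
  exact ⟨K, fun t ht => hK (mem_image_of_mem _ ht)⟩

theorem HasDerivAt.linearMap_comp {𝕜 F G : Type*} [NontriviallyNormedField 𝕜] [CompleteSpace 𝕜]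
    [NormedAddCommGroup F] [NormedSpace 𝕜 F] [FiniteDimensional 𝕜 F] [NormedAddCommGroup G]
    [NormedSpace 𝕜 G] (f : F →ₗ[𝕜] G) {S : 𝕜 → F} {S' : F} {t : 𝕜} (h : HasDerivAt S S' t) :
    HasDerivAt (fun t => f (S t)) (f S') t :=
  (LinearMap.toContinuousLinearMap f).hasFDerivAt.comp_hasDerivAt t h

section ODE

variable {E : Type*} [NormedAddCommGroup E] [NormedSpace ℝ E] {L : ℝ → E →L[ℝ] E}

theorem IsIntegralCurveOn.exists_glue_Icc {v : ℝ → E → E} {γ₁ γ₂ : ℝ → E} {a b c : ℝ}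
    (hab : a ≤ b) (hbc : b ≤ c) (h₁ : IsIntegralCurveOn γ₁ v (Icc a b))
    (h₂ : IsIntegralCurveOn γ₂ v (Icc b c)) (hb : γ₁ b = γ₂ b) :
    ∃ γ, EqOn γ γ₁ (Icc a b) ∧ EqOn γ γ₂ (Icc b c) ∧ IsIntegralCurveOn γ v (Icc a c) := by
  set γ : ℝ → E := fun t => if t ≤ b then γ₁ t else γ₂ t
  have hγ₁ : EqOn γ γ₁ (Icc a b) := fun t ht => if_pos ht.2
  have hγ₂ : EqOn γ γ₂ (Icc b c) := fun t ht => by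
    rcases ht.1.eq_or_lt with rfl | hlt
    · exact (if_pos le_rfl).trans hb
    · exact if_neg hlt.not_ge
  refine ⟨γ, hγ₁, hγ₂, fun t ht => ?_⟩
  have piece : ∀ {p q : ℝ} {γ' : ℝ → E}, EqOn γ γ' (Icc p q) → IsIntegralCurveOn γ' v (Icc p q) →
      HasDerivWithinAt γ (v t (γ t)) (Icc p q) t := by
    intro p q γ' heq h'
    by_cases htpq : t ∈ Icc p q
    · rw [heq htpq]
      exact (h' t htpq).congr heq (heq htpq)
    · exact HasFDerivWithinAt.of_notMem_closure (by rwa [closure_Icc])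
  rw [← Icc_union_Icc_eq_Icc hab hbc]
  exact (piece hγ₁ h₁).union (piece hγ₂ h₂)

theorem exists_isIntegralCurveOn_clm_of_nnnorm_le [CompleteSpace E] (hL : Continuous L)
    {K : ℝ≥0} {a b t₀ : ℝ} (hK : ∀ t ∈ Icc a b, ‖L t‖₊ ≤ K) (hab : 2 * K * (b - a) ≤ 1)
    (ht₀ : t₀ ∈ Icc a b) (x₀ : E) :
    ∃ γ, γ t₀ = x₀ ∧ IsIntegralCurveOn γ (fun t => L t) (Icc a b) := by
  have hpl : IsPicardLindelof (fun t => L t) (⟨t₀, ht₀⟩ : Icc a b) x₀ ‖x₀‖₊ 0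
      (2 * K * ‖x₀‖₊) K :=
    { lipschitzOnWith := fun t ht => ((L t).lipschitz.weaken (hK t ht)).lipschitzOnWith
      continuousOn := fun x _ => (hL.clm_apply continuous_const).continuousOn
      norm_le := fun t ht x hx => by
        have hx' : ‖x‖ ≤ 2 * ‖x₀‖ := by
          have := norm_le_norm_add_norm_sub' x x₀
          rw [mem_closedBall_iff_norm, coe_nnnorm] at hx
          linarith
        calc ‖L t x‖ ≤ ‖L t‖ * ‖x‖ := (L t).le_opNorm x
          _ ≤ K * (2 * ‖x₀‖) := mul_le_mul (hK t ht) hx' (norm_nonneg _) K.2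
          _ = _ := by push_cast; ring
      mul_max_le := by
        have hmax : max (b - t₀) (t₀ - a) ≤ b - a :=
          max_le (by linarith [ht₀.1]) (by linarith [ht₀.2])
        have : (2 * K * ‖x₀‖ : ℝ) * max (b - t₀) (t₀ - a) ≤ ‖x₀‖ := by
          calc (2 * K * ‖x₀‖ : ℝ) * max (b - t₀) (t₀ - a) ≤ 2 * K * ‖x₀‖ * (b - a) := by gcongr
            _ = ‖x₀‖ * (2 * K * (b - a)) := by ring
            _ ≤ ‖x₀‖ := mul_le_of_le_one_right (norm_nonneg _) hab
        simpa using this }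
  exact hpl.exists_eq_forall_mem_Icc_hasDerivWithinAt₀

theorem exists_isIntegralCurveOn_clm_Icc_neg [CompleteSpace E] (hL : Continuous L) (T : ℝ)
    (x₀ : E) : ∃ γ, γ 0 = x₀ ∧ IsIntegralCurveOn γ (fun t => L t) (Icc (-T) T) := by
  rcases lt_or_ge T 0 with hT | hT
  · refine ⟨fun _ => x₀, rfl, fun t ht => ?_⟩
    exact absurd (ht.1.trans ht.2) (by linarith)
  obtain ⟨K, hK⟩ := exists_forall_mem_Icc_nnnorm_le hL (-T) T
  set δ : ℝ := 1 / (2 * K + 1)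
  have hδ : 0 < δ := by positivity
  have hlocal : ∀ {a b t₀ : ℝ}, -T ≤ a → b ≤ T → b - a ≤ δ → t₀ ∈ Icc a b → ∀ x : E,
      ∃ γ, γ t₀ = x ∧ IsIntegralCurveOn γ (fun t => L t) (Icc a b) := by
    intro a b t₀ ha hb hδab ht₀ x
    refine exists_isIntegralCurveOn_clm_of_nnnorm_le hL
      (fun t ht => hK t ⟨ha.trans ht.1, ht.2.trans hb⟩) ?_ ht₀ x
    calc 2 * K * (b - a) ≤ 2 * K * δ := by gcongr
      _ ≤ 1 := by rw [mul_one_div, div_le_one (by positivity)]; linarith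
  let P : ℝ → Prop := fun r => ∃ γ, γ 0 = x₀ ∧ IsIntegralCurveOn γ (fun t => L t) (Icc (-r) r)
  have hP0 : P 0 := by
    simpa [P] using hlocal (by linarith) hT (by simp [hδ.le]) (left_mem_Icc.2 le_rfl) x₀
  have step : ∀ r r', 0 ≤ r → r ≤ r' → r' ≤ T → r' ≤ r + δ → P r → P r' := by
    rintro r r' hr hrr' hr'T hr'δ ⟨γ, hγ0, hγ⟩
    obtain ⟨γr, hγr, hγr'⟩ := hlocal (by linarith) hr'T (by linarith) (left_mem_Icc.2 hrr') (γ r)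
    obtain ⟨γl, hγl, hγl'⟩ :=
      hlocal (by linarith) (by linarith) (by linarith) (right_mem_Icc.2 (neg_le_neg hrr')) (γ (-r))
    obtain ⟨γ₁, hγ₁l, hγ₁, hγ₁'⟩ :=
      hγl'.exists_glue_Icc (neg_le_neg hrr') (by linarith) hγ hγl
    obtain ⟨γ₂, hγ₂₁, -, hγ₂'⟩ :=
      hγ₁'.exists_glue_Icc (by linarith) hrr' hγr' ((hγ₁ ⟨by linarith, le_rfl⟩).trans hγr.symm)
    refine ⟨γ₂, ?_, hγ₂'⟩
    rw [hγ₂₁ ⟨by linarith, hr⟩, hγ₁ ⟨by linarith, hr⟩, hγ0]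
  have hPm : ∀ m : ℕ, P (min T (m * δ)) := by
    intro m
    induction m with
    | zero => simpa [hT] using hP0
    | succ m ih =>
      refine step _ _ (le_min hT (by positivity)) (min_le_min_left _ (by gcongr; simp))
        (min_le_left _ _) ?_ ih
      calc min T ((m + 1 : ℕ) * δ) ≤ min (T + δ) (m * δ + δ) :=
            min_le_min (by linarith) (by push_cast; linarith)
        _ = min T (m * δ) + δ := min_add_add_right _ _ _
  obtain ⟨m, hm⟩ := exists_nat_ge (T / δ)
  simpa [P, min_eq_left ((div_le_iff₀ hδ).1 hm)] using hPm m

theorem IsIntegralCurveOn.eqOn_Ioo_of_clm (hL : Continuous L) {γ₁ γ₂ : ℝ → E} {a b t₀ : ℝ}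
    (h₁ : IsIntegralCurveOn γ₁ (fun t => L t) (Ioo a b))
    (h₂ : IsIntegralCurveOn γ₂ (fun t => L t) (Ioo a b)) (ht₀ : t₀ ∈ Ioo a b)
    (h : γ₁ t₀ = γ₂ t₀) : EqOn γ₁ γ₂ (Ioo a b) := by
  obtain ⟨K, hK⟩ := exists_forall_mem_Icc_nnnorm_le hL a b
  have hderiv : ∀ {γ}, IsIntegralCurveOn γ (fun t => L t) (Ioo a b) →
      ∀ t ∈ Ioo a b, HasDerivAt γ (L t (γ t)) t ∧ γ t ∈ (univ : Set E) :=
    fun hγ t ht => ⟨(hγ.isIntegralCurveAt (Ioo_mem_nhds ht.1 ht.2)).hasDerivAt, mem_univ _⟩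
  exact ODE_solution_unique_of_mem_Ioo (s := fun _ => univ)
    (fun t ht => ((L t).lipschitz.weaken (hK t (Ioo_subset_Icc_self ht))).lipschitzOnWith)
    ht₀ (hderiv h₁) (hderiv h₂) h

theorem exists_isIntegralCurve_clm [CompleteSpace E] (hL : Continuous L) (x₀ : E) :
    ∃ γ, γ 0 = x₀ ∧ IsIntegralCurve γ (fun t => L t) := by
  choose γ hγ0 hγ using fun T : ℝ => exists_isIntegralCurveOn_clm_Icc_neg hL T x₀
  have agree : ∀ T T' s, |s| < T → |s| < T' → γ T s = γ T' s := by
    intro T T' s hT hT'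
    have hc : 0 < min T T' := lt_min ((abs_nonneg s).trans_lt hT) ((abs_nonneg s).trans_lt hT')
    have hsub : ∀ T'', min T T' ≤ T'' → Ioo (-min T T') (min T T') ⊆ Icc (-T'') T'' :=
      fun T'' h => Ioo_subset_Icc_self.trans (Icc_subset_Icc (by linarith) h)
    refine IsIntegralCurveOn.eqOn_Ioo_of_clm hL ((hγ T).mono (hsub T (min_le_left _ _)))
      ((hγ T').mono (hsub T' (min_le_right _ _))) ⟨by linarith, hc⟩ ((hγ0 T).trans (hγ0 T').symm)
      ?_
    rw [mem_Ioo, ← abs_lt]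
    exact lt_min hT hT'
  refine ⟨fun t => γ (|t| + 1) t, hγ0 _, fun t => ?_⟩
  have hev : (fun s => γ (|s| + 1) s) =ᶠ[𝓝 t] γ (|t| + 1) := by
    filter_upwards [(isOpen_lt continuous_abs continuous_const).mem_nhds (lt_add_one |t|)]
      with s hs
    exact agree _ _ s (lt_add_one _) hs
  have hmem : Icc (-(|t| + 1)) (|t| + 1) ∈ 𝓝 t := by
    apply Icc_mem_nhds <;> linarith [neg_abs_le t, le_abs_self t]
  exact ((hγ _).isIntegralCurveAt hmem).hasDerivAt.congr_of_eventuallyEq hev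

end ODE

section MatrixCalculus

-- Any norm gives the entrywise topology; this one makes matrices a normed algebra.
open scoped Matrix.Norms.Operator

variable {ι : Type*} [Fintype ι] {S : ℝ → Matrix ι ι ℝ} {S' : Matrix ι ι ℝ} {t : ℝ}

theorem HasDerivAt.matrix_apply (h : HasDerivAt S S' t) (i j : ι) :
    HasDerivAt (fun t => S t i j) (S' i j) t :=
  h.linearMap_comp (entryLinearMap ℝ ℝ i j)

theorem HasDerivAt.matrix_transpose (h : HasDerivAt S S' t) :
    HasDerivAt (fun t => (S t)ᵀ) S'ᵀ t :=
  h.linearMap_comp (transposeLinearEquiv ι ι ℝ ℝ).toLinearMap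

theorem HasDerivAt.mulVec (h : HasDerivAt S S' t) (v : ι → ℝ) :
    HasDerivAt (fun t => S t *ᵥ v) (S' *ᵥ v) t :=
  h.linearMap_comp (F := Matrix ι ι ℝ) (G := ι → ℝ)
    { toFun := fun S => S *ᵥ v
      map_add' := fun S T => add_mulVec S T v
      map_smul' := fun c S => smul_mulVec c S v }

theorem HasDerivAt.dotProduct_mulVec (h : HasDerivAt S S' t) (v w : ι → ℝ) :
    HasDerivAt (fun t => v ⬝ᵥ S t *ᵥ w) (v ⬝ᵥ S' *ᵥ w) t :=
  (h.mulVec w).linearMap_comp (dotProductBilin ℝ ℝ v)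

theorem HasDerivAt.matrix_inv [DecidableEq ι] (h : HasDerivAt S S' t) (hS : IsUnit (S t)) :
    HasDerivAt (fun t => (S t)⁻¹) (-((S t)⁻¹ * S' * (S t)⁻¹)) t := by
  obtain ⟨u, hu⟩ := hS
  have hinv := hasFDerivAt_ringInverse (𝕜 := ℝ) u
  rw [hu] at hinv
  have := hinv.comp_hasDerivAt t h
  simp only [Function.comp_def, ← nonsing_inv_eq_ringInverse] at this
  refine this.congr_deriv ?_
  simp [← hu, coe_units_inv, Matrix.mul_assoc]

theorem posSemidef_sub_of_hasDerivAt {S S' : ℝ → Matrix ι ι ℝ}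
    (hS : ∀ t, HasDerivAt S (S' t) t) (hS' : ∀ t, (S' t).PosSemidef) {a b : ℝ} (hab : a ≤ b) :
    (S b - S a).PosSemidef := by
  refine .of_dotProduct_mulVec_nonneg ?_ fun v => ?_
  · have hskew : ∀ t, HasDerivAt (fun t => S t - (S t)ᵀ) 0 t := fun t => by
      have := (hS t).sub (hS t).matrix_transpose
      rwa [← conjTranspose_eq_transpose_of_trivial (S' t), (hS' t).1.eq, sub_self] at this
    have := is_const_of_deriv_eq_zero (fun t => (hskew t).differentiableAt)
      (fun t => (hskew t).deriv) b a
    rw [IsHermitian, conjTranspose_eq_transpose_of_trivial, transpose_sub]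
    exact (sub_eq_sub_iff_sub_eq_sub.1 this).symm
  · have hmono : Monotone fun t => v ⬝ᵥ S t *ᵥ v :=
      monotone_of_deriv_nonneg (fun t => ((hS t).dotProduct_mulVec v v).differentiableAt)
        fun t => by simpa [((hS t).dotProduct_mulVec v v).deriv] using
          (hS' t).dotProduct_mulVec_nonneg v
    simpa [sub_mulVec] using hmono hab

theorem Matrix.lipschitzWith_mulVec (B : Matrix ι ι ℝ) : LipschitzWith ‖B‖₊ (B *ᵥ ·) :=
  LipschitzWith.of_dist_le_mul fun x y => by
    simpa [dist_eq_norm, ← mulVec_sub] using linfty_opNorm_mulVec B (x - y)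

end MatrixCalculus

theorem Matrix.mul_nonsing_inv_eq_conjTranspose_mul_mul {ι R : Type*} [Fintype ι] [DecidableEq ι]
    [CommRing R] [StarRing R] [TrivialStar R] {X Y : Matrix ι ι R} (hX : IsUnit X) :
    Y * X⁻¹ = (X⁻¹)ᴴ * (Xᵀ * Y) * X⁻¹ := by
  rw [conjTranspose_eq_transpose_of_trivial, ← Matrix.mul_assoc, ← transpose_mul,
    mul_nonsing_inv _ ((isUnit_iff_isUnit_det _).1 hX), transpose_one, Matrix.one_mul]

section Hamiltonian

open scoped Matrix.Norms.Operator

variable {ι : Type*} [Fintype ι] {M A X Y : ℝ → Matrix ι ι ℝ}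

theorem exists_hamiltonian_flow [DecidableEq ι] (hM : Continuous M) (hA : Continuous A)
    (G₀ : Matrix ι ι ℝ) :
    ∃ X Y : ℝ → Matrix ι ι ℝ, X 0 = 1 ∧ Y 0 = G₀ ∧
      (∀ t, HasDerivAt X (M t * X t + A t * Y t) t) ∧ ∀ t, HasDerivAt Y (-(M t)ᵀ * Y t) t := by
  let L : ℝ → (Matrix ι ι ℝ × Matrix ι ι ℝ) →L[ℝ] (Matrix ι ι ℝ × Matrix ι ι ℝ) := fun t =>
    LinearMap.toContinuousLinearMap
      { toFun := fun Z => (M t * Z.1 + A t * Z.2, -(M t)ᵀ * Z.2)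
        map_add' := fun Z W => by ext <;> simp [Matrix.mul_add] <;> abel
        map_smul' := fun c Z => by simp }
  have hL : Continuous L := continuous_clm_apply.2 fun Z =>
    ((hM.matrix_mul continuous_const).add (hA.matrix_mul continuous_const)).prodMk
      (hM.matrix_transpose.neg.matrix_mul continuous_const)
  obtain ⟨γ, hγ0, hγ⟩ := exists_isIntegralCurve_clm hL (1, G₀)
  exact ⟨fun t => (γ t).1, fun t => (γ t).2, by simp [hγ0], by simp [hγ0],
    fun t => (hγ t).linearMap_comp (LinearMap.fst ℝ _ _),
    fun t => (hγ t).linearMap_comp (LinearMap.snd ℝ _ _)⟩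

theorem hasDerivAt_transpose_mul_of_hamiltonian {t : ℝ}
    (hX : HasDerivAt X (M t * X t + A t * Y t) t) (hY : HasDerivAt Y (-(M t)ᵀ * Y t) t)
    (hA : (A t).IsHermitian) :
    HasDerivAt (fun t => (X t)ᵀ * Y t) ((Y t)ᵀ * A t * Y t) t := by
  classical
  refine (hX.matrix_transpose.fun_mul hY).congr_deriv ?_
  rw [transpose_add, transpose_mul, transpose_mul, ← conjTranspose_eq_transpose_of_trivial (A t),
    hA.eq]
  noncomm_ring

theorem hasDerivAt_mul_inv_of_hamiltonian [DecidableEq ι] {t : ℝ}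
    (hX : HasDerivAt X (M t * X t + A t * Y t) t) (hY : HasDerivAt Y (-(M t)ᵀ * Y t) t)
    (hXt : IsUnit (X t)) :
    HasDerivAt (fun t => Y t * (X t)⁻¹) (-(M t)ᵀ * (Y t * (X t)⁻¹) - Y t * (X t)⁻¹ * M t -
      Y t * (X t)⁻¹ * A t * (Y t * (X t)⁻¹)) t := by
  refine (hY.fun_mul (hX.matrix_inv hXt)).congr_deriv ?_
  have hXX : X t * (X t)⁻¹ = 1 := mul_nonsing_inv _ ((isUnit_iff_isUnit_det _).1 hXt)
  simp only [Matrix.mul_add, Matrix.add_mul, Matrix.mul_assoc, hXX, Matrix.mul_one, Matrix.mul_neg]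
  noncomm_ring

theorem posSemidef_transpose_mul_sub_of_hamiltonian
    (hX : ∀ t, HasDerivAt X (M t * X t + A t * Y t) t) (hY : ∀ t, HasDerivAt Y (-(M t)ᵀ * Y t) t)
    (hA : ∀ t, (A t).PosSemidef) {a b : ℝ} (hab : a ≤ b) :
    ((X b)ᵀ * Y b - (X a)ᵀ * Y a).PosSemidef :=
  posSemidef_sub_of_hasDerivAt
    (fun t => hasDerivAt_transpose_mul_of_hamiltonian (hX t) (hY t) (hA t).isHermitian)
    (fun t => by
      simpa [conjTranspose_eq_transpose_of_trivial] using (hA t).conjTranspose_mul_mul_same (Y t))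
    hab

theorem injective_mulVec_of_hamiltonian [DecidableEq ι] (hM : Continuous M)
    (hX : ∀ t, HasDerivAt X (M t * X t + A t * Y t) t) (hY : ∀ t, HasDerivAt Y (-(M t)ᵀ * Y t) t)
    (hA : ∀ t, (A t).PosSemidef) (hX0 : X 0 = 1) (hY0 : (Y 0).PosSemidef) {τ : ℝ} (hτ : 0 ≤ τ) :
    Function.Injective (X τ).mulVec := by
  rw [← coe_mulVecLin, injective_iff_map_eq_zero]
  intro v hv
  rw [coe_mulVecLin] at hv
  set q : ℝ → ℝ := fun t => v ⬝ᵥ ((X t)ᵀ * Y t) *ᵥ v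
  have hq_mono : Monotone q := fun s t hst => by
    simpa [q, sub_mulVec] using
      (posSemidef_transpose_mul_sub_of_hamiltonian hX hY hA hst).dotProduct_mulVec_nonneg v
  have hq0 : 0 ≤ q 0 := by simpa [q, hX0] using hY0.dotProduct_mulVec_nonneg v
  have hqτ : q τ = 0 := by
    simp only [q]
    rw [← mulVec_mulVec, dotProduct_mulVec, vecMul_transpose, hv, zero_dotProduct]
  have hq : ∀ t ∈ Icc 0 τ, q t = 0 := fun t ht =>
    le_antisymm (hqτ ▸ hq_mono ht.2) (hq0.trans (hq_mono ht.1))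
  have hAY : ∀ t ∈ Ioc 0 τ, A t *ᵥ (Y t *ᵥ v) = 0 := by
    intro t ht
    rw [← (hA t).dotProduct_mulVec_zero_iff, star_trivial]
    have hderiv : HasDerivWithinAt q ((Y t *ᵥ v) ⬝ᵥ A t *ᵥ (Y t *ᵥ v)) (Icc 0 t) t := by
      refine ((hasDerivAt_transpose_mul_of_hamiltonian (hX t) (hY t) (hA t).isHermitian
        ).dotProduct_mulVec v v).hasDerivWithinAt.congr_deriv ?_
      rw [← mulVec_mulVec, ← mulVec_mulVec, dotProduct_mulVec, vecMul_transpose]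
    have hzero : HasDerivWithinAt q 0 (Icc 0 t) t :=
      (hasDerivWithinAt_const t _ 0).congr (fun s hs => hq s ⟨hs.1, hs.2.trans ht.2⟩)
        (hq t ⟨ht.1.le, ht.2⟩)
    exact (uniqueDiffOn_Icc ht.1 t (right_mem_Icc.2 ht.1.le)).eq_deriv _ hderiv hzero
  obtain ⟨K, hK⟩ := exists_forall_mem_Icc_nnnorm_le hM 0 τ
  have hXv : ∀ t, HasDerivAt (fun t => X t *ᵥ v) (M t *ᵥ (X t *ᵥ v) + A t *ᵥ (Y t *ᵥ v)) t :=
    fun t => by simpa [add_mulVec, mulVec_mulVec] using (hX t).mulVec v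
  have := ODE_solution_unique_of_mem_Icc_left (v := fun t x => M t *ᵥ x) (s := fun _ => univ)
    (f := fun t => X t *ᵥ v) (g := fun _ => 0)
    (fun t ht =>
      ((M t).lipschitzWith_mulVec.weaken (hK t (Ioc_subset_Icc_self ht))).lipschitzOnWith)
    (HasDerivAt.continuousOn fun t _ => hXv t)
    (fun t ht => by simpa [hAY t ht] using (hXv t).hasDerivWithinAt) (fun _ _ => mem_univ _)
    continuousOn_const (fun t _ => by simpa using hasDerivWithinAt_const t _ 0)
    (fun _ _ => mem_univ _) hv
  simpa [hX0] using this ⟨le_rfl, hτ⟩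

end Hamiltonian

/-- For continuous coefficients `M, A` with each `A τ` symmetric positive
semidefinite and a symmetric positive semidefinite initial value `G₀`, the solution of the
Riccati matrix ODE `Ġ = -Mᵀ G - G M - G A G`, `G 0 = G₀` exists for all `τ ≥ 0` and stays
positive semidefinite; it stays positive definite if `G₀` is positive definite. -/
theorem stmt_0 (n : ℕ) (M A : ℝ → Matrix (Fin n) (Fin n) ℝ)
    (hM : ∀ i j, Continuous fun τ => M τ i j)
    (hA : ∀ i j, Continuous fun τ => A τ i j)
    (hApsd : ∀ τ, (A τ).PosSemidef)
    (G₀ : Matrix (Fin n) (Fin n) ℝ) (hG₀ : G₀.PosSemidef) :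
    ∃ G : ℝ → Matrix (Fin n) (Fin n) ℝ,
      G 0 = G₀ ∧
      (∀ τ, 0 ≤ τ → ∀ i j, HasDerivAt (fun t => G t i j)
        ((-(M τ)ᵀ * G τ - G τ * M τ - G τ * A τ * G τ) i j) τ) ∧
      (∀ τ, 0 ≤ τ → (G τ).PosSemidef) ∧
      (G₀.PosDef → ∀ τ, 0 ≤ τ → (G τ).PosDef) := by
  have hMc : Continuous M := continuous_pi fun i => continuous_pi (hM i)
  obtain ⟨X, Y, hX0, hY0, hX, hY⟩ :=
    exists_hamiltonian_flow hMc (continuous_pi fun i => continuous_pi (hA i)) G₀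
  have hXunit : ∀ τ, 0 ≤ τ → IsUnit (X τ) := fun τ hτ => mulVec_injective_iff_isUnit.1 <|
    injective_mulVec_of_hamiltonian hMc hX hY hApsd hX0 (hY0 ▸ hG₀) hτ
  have hS : ∀ τ, 0 ≤ τ → ((X τ)ᵀ * Y τ - G₀).PosSemidef := fun τ hτ => by
    simpa [hX0, hY0] using posSemidef_transpose_mul_sub_of_hamiltonian hX hY hApsd hτ
  refine ⟨fun t => Y t * (X t)⁻¹, by simp [hX0, hY0], fun τ hτ =>
    (hasDerivAt_mul_inv_of_hamiltonian (hX τ) (hY τ) (hXunit τ hτ)).matrix_apply, ?_, ?_⟩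
  · intro τ hτ
    show (Y τ * (X τ)⁻¹).PosSemidef
    rw [mul_nonsing_inv_eq_conjTranspose_mul_mul (hXunit τ hτ), ← add_sub_cancel G₀ ((X τ)ᵀ * Y τ)]
    exact (hG₀.add (hS τ hτ)).conjTranspose_mul_mul_same _
  · intro hG₀pd τ hτ
    show (Y τ * (X τ)⁻¹).PosDef
    rw [mul_nonsing_inv_eq_conjTranspose_mul_mul (hXunit τ hτ), ← add_sub_cancel G₀ ((X τ)ᵀ * Y τ)]
    exact (hG₀pd.add_posSemidef (hS τ hτ)).conjTranspose_mul_mul_same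
      (mulVec_injective_iff_isUnit.2 (isUnit_nonsing_inv_iff.2 (hXunit τ hτ)))
end

section
/- Let M, A : ℝ → Mat(n×n, ℝ) be continuous and T-periodic with each A(τ) symmetric positive semidefinite, and let G : ℝ → Mat(n×n, ℝ) be a T-periodic symmetric solution of the PRDE Ġ(τ) = −M(τ)ᵀG(τ) − G(τ)M(τ) − G(τ)A(τ)G(τ). Then G(τ) is positive definite (respectively positive semidefinite) for all τ if and only if G(τ₀) is positive definite (respectively positive semidefinite) for some τ₀ ∈ [0, T). -/
/-!
Along a solution of the linear ODE `ẋ = (M + A G) x`, the quadratic form `xᵀ G x` has derivative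
`(G x)ᵀ A (G x) ≥ 0`. Solving this ODE backwards from any `v` at time `t` thus gives a `w` at any
earlier time `s`, nonzero when `v` is (uniqueness of solutions), with `wᵀ G(s) w ≤ vᵀ G(t) v`.
Hence (semi)definiteness of `G` propagates forward in time, and by periodicity every time lies
ahead of `τ₀`.
-/

open Matrix Set
open scoped NNReal

namespace Matrix

variable {ι R : Type*} [Fintype ι] [Ring R] [PartialOrder R] [StarRing R]

/-- A vector-wise weakening of `Φᴴ P Φ ≤ Q` for an injective `Φ`. -/
def QuadFormDominated (P Q : Matrix ι ι R) : Prop :=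
  ∀ v, ∃ w, (v ≠ 0 → w ≠ 0) ∧ star w ⬝ᵥ (P *ᵥ w) ≤ star v ⬝ᵥ (Q *ᵥ v)

theorem QuadFormDominated.trans {P Q S : Matrix ι ι R} (hPQ : QuadFormDominated P Q)
    (hQS : QuadFormDominated Q S) : QuadFormDominated P S := fun v ↦ by
  obtain ⟨u, hu, huv⟩ := hQS v
  obtain ⟨w, hw, hwu⟩ := hPQ u
  exact ⟨w, hw ∘ hu, hwu.trans huv⟩

theorem PosSemidef.of_quadFormDominated {P Q : Matrix ι ι R} (hP : P.PosSemidef)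
    (hQ : Q.IsHermitian) (h : QuadFormDominated P Q) : Q.PosSemidef :=
  .of_dotProduct_mulVec_nonneg hQ fun v ↦
    let ⟨w, _, hwv⟩ := h v
    (hP.dotProduct_mulVec_nonneg w).trans hwv

theorem PosDef.of_quadFormDominated {P Q : Matrix ι ι R} (hP : P.PosDef)
    (hQ : Q.IsHermitian) (h : QuadFormDominated P Q) : Q.PosDef :=
  posDef_iff_dotProduct_mulVec.mpr ⟨hQ, fun v hv ↦
    let ⟨_, hw, hwv⟩ := h v
    (hP.dotProduct_mulVec_pos (hw hv)).trans_le hwv⟩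

end Matrix

theorem rel_of_forall_sub_le {R : ℝ → ℝ → Prop} {s t δ : ℝ} (hδ : 0 < δ) (hst : s ≤ t)
    (htrans : ∀ x y z, R x y → R y z → R x z)
    (hloc : ∀ x ∈ Icc s t, ∀ y ∈ Icc s t, x ≤ y → y - x ≤ δ → R x y) : R s t := by
  have hchain (k : ℕ) : R s (min t (s + k * δ)) := by
    induction k with
    | zero => simpa [hst] using hloc s ⟨le_rfl, hst⟩ s ⟨le_rfl, hst⟩ le_rfl (by simp [hδ.le])
    | succ k ih =>
      refine htrans _ _ _ ih (hloc _ ⟨?_, min_le_left _ _⟩ _ ⟨?_, min_le_left _ _⟩ ?_ ?_)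
      · exact le_min hst (by nlinarith)
      · exact le_min hst (by push_cast; nlinarith)
      · exact min_le_min_left _ (by push_cast; nlinarith)
      · push_cast
        rcases le_total t (s + k * δ) with h | h
        · rw [min_eq_left h, min_eq_left (by linarith)]
          linarith
        · rw [min_eq_right h]
          linarith [min_le_right t (s + (k + 1) * δ)]
  obtain ⟨k, hk⟩ := exists_nat_ge ((t - s) / δ)
  rw [div_le_iff₀ hδ] at hk
  simpa [min_eq_left (show t ≤ s + k * δ by linarith)] using hchain k

section LinearODE

variable {E : Type*} [NormedAddCommGroup E] [NormedSpace ℝ E] {B : ℝ → E →L[ℝ] E}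
  {a b : ℝ} {K : ℝ≥0}

theorem exists_eq_forall_mem_Icc_hasDerivWithinAt_clm_apply [CompleteSpace E]
    (hB : ContinuousOn B (Icc a b)) (hK : ∀ t ∈ Icc a b, ‖B t‖ ≤ K)
    (hab : 2 * K * (b - a) ≤ 1) (t₀ : Icc a b) (v : E) :
    ∃ x : ℝ → E, x t₀ = v ∧ ∀ t ∈ Icc a b, HasDerivWithinAt x (B t (x t)) (Icc a b) t := by
  have hPL : IsPicardLindelof (fun t ↦ B t) t₀ v (‖v‖₊ + 1) 0 (2 * K * (‖v‖₊ + 1)) K := by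
    refine ⟨fun t ht ↦ ?_, fun x _ ↦ hB.clm_apply continuousOn_const, fun t ht x hx ↦ ?_,
      ?_⟩
    · exact ((B t).lipschitz.weaken (by exact_mod_cast hK t ht)).lipschitzOnWith
    · rw [Metric.mem_closedBall, dist_eq_norm] at hx
      push_cast at hx
      have hxv : ‖x‖ ≤ 2 * (‖v‖ + 1) := by
        linarith [norm_le_norm_add_norm_sub' x v, (norm_nonneg v)]
      calc ‖B t x‖ ≤ K * ‖x‖ := (B t).le_of_opNorm_le (hK t ht) x
        _ ≤ K * (2 * (‖v‖ + 1)) := by gcongr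
        _ = _ := by push_cast; ring
    · have hspan : max (b - t₀) (t₀ - a) ≤ b - a :=
        max_le (by linarith [t₀.2.1]) (by linarith [t₀.2.2])
      have hspan0 : 0 ≤ max (b - t₀) (t₀ - a) := le_max_of_le_left (by linarith [t₀.2.2])
      push_cast
      calc 2 * K * (‖v‖ + 1) * max (b - t₀) (t₀ - a) ≤ 2 * K * (b - a) * (‖v‖ + 1) := by
            rw [mul_right_comm]; gcongr
        _ ≤ ‖v‖ + 1 - 0 := by nlinarith [norm_nonneg v]
  exact hPL.exists_eq_forall_mem_Icc_hasDerivWithinAt₀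

theorem eq_zero_of_hasDerivWithinAt_clm_apply_of_eq_zero_left {x : ℝ → E}
    (hK : ∀ t ∈ Icc a b, ‖B t‖ ≤ K)
    (hx : ∀ t ∈ Icc a b, HasDerivWithinAt x (B t (x t)) (Icc a b) t) (ha : x a = 0)
    (hab : a ≤ b) : x b = 0 := by
  refine eq_zero_of_abs_deriv_le_mul_abs_self_of_eq_zero_right (K := K)
    (fun t ht ↦ (hx t ht).continuousWithinAt)
    (fun t ht ↦ (hx t (Ico_subset_Icc_self ht)).mono_of_mem_nhdsWithin
      (Icc_mem_nhdsGE_of_mem ht))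
    ha (fun t ht ↦ ?_) b ⟨hab, le_rfl⟩
  exact (B t).le_of_opNorm_le (hK t (Ico_subset_Icc_self ht)) _

end LinearODE

section Calculus

variable {𝕜 ι : Type*} [NontriviallyNormedField 𝕜] [Fintype ι] {s : Set 𝕜} {τ : 𝕜}

theorem HasDerivWithinAt.dotProduct {u w : 𝕜 → ι → 𝕜} {u' w' : ι → 𝕜}
    (hu : HasDerivWithinAt u u' s τ) (hw : HasDerivWithinAt w w' s τ) :
    HasDerivWithinAt (fun t ↦ u t ⬝ᵥ w t) (u' ⬝ᵥ w τ + u τ ⬝ᵥ w') s τ := by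
  show HasDerivWithinAt (fun t ↦ ∑ i, u t i * w t i)
    (∑ i, u' i * w τ i + ∑ i, u τ i * w' i) s τ
  rw [← Finset.sum_add_distrib]
  exact .fun_sum fun i _ ↦ (hasDerivWithinAt_pi.1 hu i).mul (hasDerivWithinAt_pi.1 hw i)

theorem HasDerivWithinAt.mulVec {G : 𝕜 → Matrix ι ι 𝕜} {x : 𝕜 → ι → 𝕜}
    {G' : Matrix ι ι 𝕜} {x' : ι → 𝕜} (hG : ∀ i j, HasDerivWithinAt (fun t ↦ G t i j) (G' i j) s τ)
    (hx : HasDerivWithinAt x x' s τ) :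
    HasDerivWithinAt (fun t ↦ G t *ᵥ x t) (G' *ᵥ x τ + G τ *ᵥ x') s τ :=
  hasDerivWithinAt_pi.2 fun i ↦ (hasDerivWithinAt_pi.2 (hG i)).dotProduct hx

end Calculus

section Riccati

variable {ι : Type*} [Fintype ι]

theorem riccati_dotProduct_mulVec_deriv_eq {M A G : Matrix ι ι ℝ} (hA : A.IsSymm)
    (hG : G.IsSymm) (x : ι → ℝ) :
    ((M + A * G) *ᵥ x) ⬝ᵥ (G *ᵥ x) + x ⬝ᵥ ((-Mᵀ * G - G * M - G * A * G) *ᵥ x)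
      + x ⬝ᵥ (G *ᵥ ((M + A * G) *ᵥ x)) = x ⬝ᵥ ((G * A * G) *ᵥ x) := by
  have hsymm (B : Matrix ι ι ℝ) : (B *ᵥ x) ⬝ᵥ (G *ᵥ x) = x ⬝ᵥ ((Bᵀ * G) *ᵥ x) := by
    rw [← mulVec_mulVec, dotProduct_mulVec x, vecMul_transpose]
  rw [hsymm, mulVec_mulVec, ← dotProduct_add, ← dotProduct_add, ← add_mulVec, ← add_mulVec,
    transpose_add, transpose_mul, hA.eq, hG.eq]
  congr 2
  noncomm_ring

variable {M A G : ℝ → Matrix ι ι ℝ}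

theorem monotoneOn_dotProduct_mulVec_of_riccati (hA : ∀ τ, (A τ).PosSemidef)
    (hG : ∀ τ, (G τ).IsSymm) (hGode : ∀ τ i j, HasDerivAt (fun t ↦ G t i j)
      ((-(M τ)ᵀ * G τ - G τ * M τ - G τ * A τ * G τ) i j) τ) {a b : ℝ} {x : ℝ → ι → ℝ}
    (hx : ∀ τ ∈ Icc a b, HasDerivWithinAt x ((M τ + A τ * G τ) *ᵥ x τ) (Icc a b) τ) :
    MonotoneOn (fun τ ↦ x τ ⬝ᵥ (G τ *ᵥ x τ)) (Icc a b) := by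
  have hderiv : ∀ τ ∈ Icc a b, HasDerivWithinAt (fun τ ↦ x τ ⬝ᵥ (G τ *ᵥ x τ))
      (x τ ⬝ᵥ ((G τ * A τ * G τ) *ᵥ x τ)) (Icc a b) τ := fun τ hτ ↦ by
    have := (hx τ hτ).dotProduct (.mulVec (fun i j ↦ (hGode τ i j).hasDerivWithinAt) (hx τ hτ))
    rwa [dotProduct_add, ← add_assoc, riccati_dotProduct_mulVec_deriv_eq
      (isHermitian_iff_isSymm.1 (hA τ).1) (hG τ)] at this
  refine monotoneOn_of_hasDerivWithinAt_nonneg (convex_Icc a b)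
    (fun τ hτ ↦ (hderiv τ hτ).continuousWithinAt)
    (fun τ hτ ↦ (hderiv τ (interior_subset hτ)).mono interior_subset) fun τ _ ↦ ?_
  have hGAG := (hA τ).conjTranspose_mul_mul_same (G τ)
  rw [conjTranspose_eq_transpose_of_trivial, (hG τ).eq] at hGAG
  simpa using hGAG.dotProduct_mulVec_nonneg (x τ)

theorem quadFormDominated_of_riccati (hMc : Continuous M) (hAc : Continuous A)
    (hA : ∀ τ, (A τ).PosSemidef) (hG : ∀ τ, (G τ).IsSymm) (hGode : ∀ τ i j,
      HasDerivAt (fun t ↦ G t i j) ((-(M τ)ᵀ * G τ - G τ * M τ - G τ * A τ * G τ) i j) τ)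
    {s t : ℝ} (hst : s ≤ t) : QuadFormDominated (G s) (G t) := by
  have hGc : Continuous G := continuous_pi fun i ↦ continuous_pi fun j ↦
    continuous_iff_continuousAt.2 fun τ ↦ (hGode τ i j).continuousAt
  let L : ℝ → (ι → ℝ) →L[ℝ] (ι → ℝ) := fun τ ↦
    LinearMap.toContinuousLinearMap (mulVecLin (M τ + A τ * G τ))
  have hL : Continuous L := continuous_clm_apply.2 fun y ↦
    (hMc.add (hAc.matrix_mul hGc)).matrix_mulVec continuous_const
  obtain ⟨C, hC⟩ := isCompact_Icc.exists_bound_of_continuousOn (hL.continuousOn (s := Icc s t))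
  have hK : ∀ τ ∈ Icc s t, ‖L τ‖ ≤ C.toNNReal :=
    fun τ hτ ↦ (hC τ hτ).trans (Real.le_coe_toNNReal C)
  refine rel_of_forall_sub_le (R := fun x y ↦ QuadFormDominated (G x) (G y))
    (δ := 1 / (2 * C.toNNReal + 1)) (by positivity) hst
    (fun _ _ _ ↦ QuadFormDominated.trans) fun a ha b hb hab hba v ↦ ?_
  have hsub : Icc a b ⊆ Icc s t := Icc_subset_Icc ha.1 hb.2
  have hlen : 2 * C.toNNReal * (b - a) ≤ 1 := by
    rw [le_div_iff₀ (by positivity)] at hba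
    nlinarith
  obtain ⟨x, hxb, hx⟩ := exists_eq_forall_mem_Icc_hasDerivWithinAt_clm_apply hL.continuousOn
    (fun τ hτ ↦ hK τ (hsub hτ)) hlen ⟨b, hab, le_rfl⟩ v
  refine ⟨x a, fun hv hxa ↦ hv (hxb ▸ eq_zero_of_hasDerivWithinAt_clm_apply_of_eq_zero_left
    (fun τ hτ ↦ hK τ (hsub hτ)) hx hxa hab), ?_⟩
  have hmono := monotoneOn_dotProduct_mulVec_of_riccati hA hG hGode fun τ hτ ↦ by
    simpa only [L, LinearMap.coe_toContinuousLinearMap', mulVecLin_apply] using hx τ hτ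
  simpa [hxb] using hmono ⟨le_rfl, hab⟩ ⟨hab, le_rfl⟩ hab

end Riccati

theorem stmt_1_general (n : ℕ) (T : ℝ) (hT : 0 < T)
    (M A : ℝ → Matrix (Fin n) (Fin n) ℝ)
    (hM : ∀ i j, Continuous fun τ => M τ i j)
    (hA : ∀ i j, Continuous fun τ => A τ i j)
    (hApsd : ∀ τ, (A τ).PosSemidef)
    (G : ℝ → Matrix (Fin n) (Fin n) ℝ)
    (hGper : ∀ τ, G (τ + T) = G τ)
    (hGsymm : ∀ τ, (G τ).IsSymm)
    (hGode : ∀ τ, ∀ i j, HasDerivAt (fun t => G t i j)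
        ((-(M τ)ᵀ * G τ - G τ * M τ - G τ * A τ * G τ) i j) τ) :
    ((∀ τ, (G τ).PosDef) ↔ ∃ τ₀ ∈ Set.Ico (0:ℝ) T, (G τ₀).PosDef) ∧
    ((∀ τ, (G τ).PosSemidef) ↔ ∃ τ₀ ∈ Set.Ico (0:ℝ) T, (G τ₀).PosSemidef) := by
  have hdom (τ₀ τ : ℝ) : QuadFormDominated (G τ₀) (G τ) := by
    obtain ⟨k, hk⟩ := exists_nat_ge ((τ₀ - τ) / T)
    rw [div_le_iff₀ hT] at hk
    rw [← (Function.Periodic.nat_mul hGper k) τ]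
    exact quadFormDominated_of_riccati (continuous_pi fun i ↦ continuous_pi (hM i))
      (continuous_pi fun i ↦ continuous_pi (hA i)) hApsd hGsymm hGode (by linarith)
  have hherm (τ : ℝ) : (G τ).IsHermitian := isHermitian_iff_isSymm.2 (hGsymm τ)
  have hpropagate {P : Matrix (Fin n) (Fin n) ℝ → Prop} (hP : ∀ τ₀ τ, P (G τ₀) → P (G τ)) :
      (∀ τ, P (G τ)) ↔ ∃ τ₀ ∈ Set.Ico (0:ℝ) T, P (G τ₀) :=
    ⟨fun h ↦ ⟨0, ⟨le_rfl, hT⟩, h 0⟩, fun ⟨τ₀, _, h⟩ τ ↦ hP τ₀ τ h⟩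
  exact ⟨hpropagate fun τ₀ τ h ↦ h.of_quadFormDominated (hherm τ) (hdom τ₀ τ),
    hpropagate fun τ₀ τ h ↦ h.of_quadFormDominated (hherm τ) (hdom τ₀ τ)⟩

/-- A `T`-periodic symmetric solution of the periodic Riccati differential
equation is positive definite (resp. positive semidefinite) for all `τ` iff it is positive
definite (resp. positive semidefinite) at some `τ₀ ∈ [0, T)`. -/
theorem stmt_1 (n : ℕ) (T : ℝ) (hT : 0 < T)
    (M A : ℝ → Matrix (Fin n) (Fin n) ℝ)
    (hM : ∀ i j, Continuous fun τ => M τ i j)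
    (hMper : ∀ τ, M (τ + T) = M τ)
    (hA : ∀ i j, Continuous fun τ => A τ i j)
    (hAper : ∀ τ, A (τ + T) = A τ)
    (hApsd : ∀ τ, (A τ).PosSemidef)
    (G : ℝ → Matrix (Fin n) (Fin n) ℝ)
    (hGper : ∀ τ, G (τ + T) = G τ)
    (hGsymm : ∀ τ, (G τ).IsSymm)
    (hGode : ∀ τ, ∀ i j, HasDerivAt (fun t => G t i j)
        ((-(M τ)ᵀ * G τ - G τ * M τ - G τ * A τ * G τ) i j) τ) :
    ((∀ τ, (G τ).PosDef) ↔ ∃ τ₀ ∈ Set.Ico (0:ℝ) T, (G τ₀).PosDef) ∧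
    ((∀ τ, (G τ).PosSemidef) ↔ ∃ τ₀ ∈ Set.Ico (0:ℝ) T, (G τ₀).PosSemidef) :=
  stmt_1_general n T hT M A hM hA hApsd G hGper hGsymm hGode
end

section
/- Let M : ℝ → Mat(n×n, ℝ) and N : ℝ → Mat(n×m, ℝ) be continuous T-periodic matrix-valued functions, let τ₀ ∈ [0,T), and let D(τ₀) be any real matrix such that D(τ₀)D(τ₀)ᵀ = ∫_{τ₀}^{τ₀+T} Φ_M(τ₀+T, s) N(s) N(s)ᵀ Φ_M(τ₀+T, s)ᵀ ds. Then the pair (M(·), N(·)) is controllable if and only if the time-invariant constant-matrix pair (Φ̄_M(τ₀), D(τ₀)) is controllable. -/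
open Matrix intervalIntegral

/-- A pair `(M(·), N(·))` of `T`-periodic matrix functions is controllable if no nonzero
complex left eigenvector `u` of the monodromy matrix `Φ_M(T,0)` satisfies
`u ⬝ Φ_M(τ,0)⁻¹ N(τ) = 0` for all `τ ∈ [0,T]`.  Here `Φ` denotes `τ ↦ Φ_M(τ,0)`. -/
def PerControllable {n m : ℕ} (T : ℝ) (Φ : ℝ → Matrix (Fin n) (Fin n) ℝ)
    (N : ℝ → Matrix (Fin n) (Fin m) ℝ) : Prop :=
  ¬ ∃ (u : Fin n → ℂ) (μ : ℂ), u ≠ 0 ∧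
      u ᵥ* (Φ T).map Complex.ofReal = μ • u ∧
      ∀ τ ∈ Set.Icc (0:ℝ) T,
        u ᵥ* ((Φ τ)⁻¹.map Complex.ofReal * (N τ).map Complex.ofReal) = 0

/-- A pair `(F, D)` of constant real matrices is controllable if no nonzero complex left
eigenvector `u` of `F` satisfies `u·D = 0`. -/
def CtrlPair {n k : ℕ} (F : Matrix (Fin n) (Fin n) ℝ) (D : Matrix (Fin n) (Fin k) ℝ) : Prop :=
  ¬ ∃ (u : Fin n → ℂ) (μ : ℂ), u ≠ 0 ∧
      u ᵥ* F.map Complex.ofReal = μ • u ∧ u ᵥ* D.map Complex.ofReal = 0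

/-!
A left eigenvector `u` of `Φ̄_M(0)` corresponds to the left eigenvector `v = u Φ_M(0, τ₀)` of
`Φ̄_M(τ₀)`, with the same eigenvalue `μ`. Since `D Dᵀ` is the Gramian of
`s ↦ Φ_M(τ₀+T, s) N(s)` on `[τ₀, τ₀+T]`, `v D = 0` means that
`v Φ_M(τ₀+T, s) N(s) = μ u Φ_M(0, s) N(s)` vanishes there. The eigenvalue is nonzero because the
monodromy matrix is invertible, and `μ w(s + T) = w(s)` for `w(s) = u Φ_M(0, s) N(s)`; hence the
zero set of `w` is `T`-periodic, and vanishing on `[τ₀, τ₀+T]` is the same as vanishing on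
`[0, T]`.
-/

open Set
open scoped Matrix.Norms.Elementwise

section MatrixODE

variable {ι κ ν : Type*}

theorem hasDerivAt_matrix [Fintype ι] [Fintype κ] {f : ℝ → Matrix ι κ ℝ} {f' : Matrix ι κ ℝ}
    {t : ℝ} : HasDerivAt f f' t ↔ ∀ i j, HasDerivAt (fun s => f s i j) (f' i j) t :=
  (hasDerivAt_pi (φ := f)).trans (forall_congr' fun _ => hasDerivAt_pi)

theorem HasDerivAt.matrix_mul_const [Fintype ι] [Fintype κ] [Fintype ν] {f : ℝ → Matrix ι κ ℝ}
    {f' : Matrix ι κ ℝ} {t : ℝ} (hf : HasDerivAt f f' t) (C : Matrix κ ν ℝ) :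
    HasDerivAt (fun s => f s * C) (f' * C) t := by
  rw [hasDerivAt_matrix] at hf ⊢
  intro i j
  simp only [Matrix.mul_apply]
  exact HasDerivAt.fun_sum fun k _ => (hf i k).mul_const _

theorem Matrix.norm_mul_le_card_mul [Fintype ι] [Fintype κ] [Fintype ν] {α : Type*}
    [NonUnitalSeminormedRing α] (A : Matrix ν ι α) (B : Matrix ι κ α) :
    ‖A * B‖ ≤ Fintype.card ι * ‖A‖ * ‖B‖ := by
  rw [Matrix.norm_le_iff (by positivity)]
  intro i j
  calc ‖(A * B) i j‖ ≤ ∑ k, ‖A i k * B k j‖ := norm_sum_le _ _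
    _ ≤ ∑ _k : ι, ‖A‖ * ‖B‖ := Finset.sum_le_sum fun k _ =>
        (norm_mul_le _ _).trans (mul_le_mul (norm_entry_le_entrywise_sup_norm A)
          (norm_entry_le_entrywise_sup_norm B) (norm_nonneg _) (norm_nonneg _))
    _ = Fintype.card ι * ‖A‖ * ‖B‖ := by simp [mul_assoc]

theorem ODE_solution_unique_of_linear [Fintype ι] [Fintype κ] {M : ℝ → Matrix ι ι ℝ}
    (hM : Continuous M) {f g : ℝ → Matrix ι κ ℝ} (hf : ∀ t, HasDerivAt f (M t * f t) t)
    (hg : ∀ t, HasDerivAt g (M t * g t) t) {t₀ : ℝ} (h : f t₀ = g t₀) : f = g := by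
  funext t
  set a := min t₀ t - 1
  set b := max t₀ t + 1
  obtain ⟨C, hC⟩ := (isCompact_Icc (a := a) (b := b)).exists_bound_of_continuousOn
    hM.continuousOn
  have hlip : ∀ s ∈ Ioo a b, LipschitzOnWith (Fintype.card ι * C).toNNReal
      (M s * · : Matrix ι κ ℝ → Matrix ι κ ℝ) univ := by
    refine fun s hs => (LipschitzWith.of_dist_le_mul fun X Y => ?_).lipschitzOnWith
    rw [dist_eq_norm, dist_eq_norm, ← Matrix.mul_sub]
    calc ‖M s * (X - Y)‖ ≤ Fintype.card ι * ‖M s‖ * ‖X - Y‖ := Matrix.norm_mul_le_card_mul _ _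
      _ ≤ _ := by
        gcongr
        exact (mul_le_mul_of_nonneg_left (hC s (Ioo_subset_Icc_self hs)) (by positivity)).trans
          (Real.le_coe_toNNReal _)
  refine ODE_solution_unique_of_mem_Ioo hlip (t₀ := t₀) ?_ (fun s _ => ⟨hf s, mem_univ _⟩)
    (fun s _ => ⟨hg s, mem_univ _⟩) h ?_
  · exact ⟨by linarith [min_le_left t₀ t], by linarith [le_max_left t₀ t]⟩
  · exact ⟨by linarith [min_le_right t₀ t], by linarith [le_max_right t₀ t]⟩

end MatrixODE

structure IsStateTransition {ι : Type*} [Fintype ι] [DecidableEq ι] (M : ℝ → Matrix ι ι ℝ)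
    (Φ : ℝ → ℝ → Matrix ι ι ℝ) : Prop where
  self_eq_one : ∀ s, Φ s s = 1
  hasDerivAt : ∀ s t, HasDerivAt (fun τ => Φ τ s) (M t * Φ t s) t

namespace IsStateTransition

variable {ι : Type*} [Fintype ι] [DecidableEq ι] {M : ℝ → Matrix ι ι ℝ}
  {Φ : ℝ → ℝ → Matrix ι ι ℝ} (hΦ : IsStateTransition M Φ)
include hΦ

theorem mul_eq (hM : Continuous M) (τ r s : ℝ) : Φ τ r * Φ r s = Φ τ s := by
  have hr : Φ r r * Φ r s = Φ r s := by rw [hΦ.self_eq_one, Matrix.one_mul]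
  refine congrFun (ODE_solution_unique_of_linear hM (f := fun τ => Φ τ r * Φ r s)
    (fun t => ?_) (hΦ.hasDerivAt s) hr) τ
  simpa only [Matrix.mul_assoc] using (hΦ.hasDerivAt r t).matrix_mul_const (Φ r s)

theorem mul_swap (hM : Continuous M) (a b : ℝ) : Φ a b * Φ b a = 1 := by
  rw [hΦ.mul_eq hM, hΦ.self_eq_one]

theorem inv_eq (hM : Continuous M) (a b : ℝ) : (Φ a b)⁻¹ = Φ b a :=
  Matrix.inv_eq_right_inv (hΦ.mul_swap hM a b)

theorem add_period (hM : Continuous M) {T : ℝ} (hMper : ∀ t, M (t + T) = M t) (τ s : ℝ) :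
    Φ (τ + T) (s + T) = Φ τ s := by
  have hshift : ∀ t, HasDerivAt (fun τ => Φ (τ + T) (s + T)) (M t * Φ (t + T) (s + T)) t :=
    fun t => by rw [← hMper t]; exact (hΦ.hasDerivAt (s + T) (t + T)).comp_add_const t T
  have hs : Φ (s + T) (s + T) = Φ s s := by rw [hΦ.self_eq_one, hΦ.self_eq_one]
  exact congrFun (ODE_solution_unique_of_linear hM hshift (hΦ.hasDerivAt s) hs) τ

theorem continuous_left (s : ℝ) : Continuous fun τ => Φ τ s :=
  continuous_iff_continuousAt.2 fun t => (hΦ.hasDerivAt s t).continuousAt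

theorem continuous_right (hM : Continuous M) (τ : ℝ) : Continuous (Φ τ) := by
  have hinv : Continuous fun s => (Φ s 0)⁻¹ := continuous_iff_continuousAt.2 fun s =>
    (continuousAt_matrix_inv _ (NormedRing.inverse_continuousAt
      (isUnit_det_of_right_inverse (hΦ.mul_swap hM s 0)).unit)).comp
      (f := fun τ => Φ τ 0) (hΦ.continuous_left 0).continuousAt
  have hfac : Φ τ = fun s => Φ τ 0 * (Φ s 0)⁻¹ := by
    funext s
    rw [hΦ.inv_eq hM, hΦ.mul_eq hM]
  exact hfac ▸ continuous_const.matrix_mul hinv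

end IsStateTransition

section Gramian

variable {ι κ ν : Type*} [Fintype ι]

theorem vecMul_mul_transpose_dotProduct [Fintype κ] (B : Matrix ι κ ℝ) (c : ι → ℝ) :
    c ᵥ* (B * Bᵀ) ⬝ᵥ c = (c ᵥ* B) ⬝ᵥ (c ᵥ* B) := by
  rw [← vecMul_vecMul, vecMul_transpose, dotProduct_comm, dotProduct_mulVec]

theorem vecMul_of_integral_dotProduct {G : ℝ → Matrix ι ι ℝ} (hG : Continuous G) (a b : ℝ)
    (c : ι → ℝ) :
    c ᵥ* (of fun i j => ∫ s in a..b, G s i j) ⬝ᵥ c = ∫ s in a..b, c ᵥ* G s ⬝ᵥ c := by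
  calc c ᵥ* (of fun i j => ∫ s in a..b, G s i j) ⬝ᵥ c
      = ∑ j, ∑ i, ∫ s in a..b, c i * G s i j * c j := by
        simp only [vecMul, dotProduct, of_apply, Finset.sum_mul, integral_const_mul,
          integral_mul_const]
    _ = ∑ j, ∫ s in a..b, ∑ i, c i * G s i j * c j := Finset.sum_congr rfl fun j _ =>
        (integral_finsetSum fun i _ => Continuous.intervalIntegrable (by fun_prop) _ _).symm
    _ = ∫ s in a..b, ∑ j, ∑ i, c i * G s i j * c j :=
        (integral_finsetSum fun j _ => Continuous.intervalIntegrable (by fun_prop) _ _).symm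
    _ = ∫ s in a..b, c ᵥ* G s ⬝ᵥ c := by simp only [vecMul, dotProduct, Finset.sum_mul]

theorem vecMul_eq_zero_iff_of_mul_transpose_eq_integral [Fintype κ] [Fintype ν] {a b : ℝ}
    (hab : a < b) {A : ℝ → Matrix ι κ ℝ} (hA : Continuous A) {D : Matrix ι ν ℝ}
    (hD : D * Dᵀ = of fun i j => ∫ s in a..b, (A s * (A s)ᵀ) i j) (c : ι → ℝ) :
    c ᵥ* D = 0 ↔ ∀ s ∈ Icc a b, c ᵥ* A s = 0 := by
  have hg : Continuous fun s => (c ᵥ* A s) ⬝ᵥ (c ᵥ* A s) := by fun_prop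
  have hgram : (c ᵥ* D) ⬝ᵥ (c ᵥ* D) = ∫ s in a..b, (c ᵥ* A s) ⬝ᵥ (c ᵥ* A s) := by
    simp only [← vecMul_mul_transpose_dotProduct, hD]
    exact vecMul_of_integral_dotProduct (by fun_prop) a b c
  rw [← dotProduct_self_eq_zero, hgram]
  constructor
  · intro h0 s hs
    by_contra hne
    exact (intervalIntegral.integral_pos hab hg.continuousOn
      (fun x _ => dotProduct_self_star_nonneg _)
      ⟨s, hs, dotProduct_self_star_pos_iff.2 hne⟩).ne' h0
  · intro h
    rw [integral_congr (g := fun _ => 0) fun s hs => by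
      simp [h s (uIcc_of_le hab.le ▸ hs)]]
    simp

theorem vecMul_map_ofReal_eq_zero_iff (B : Matrix ι κ ℝ) (u : ι → ℂ) :
    u ᵥ* B.map Complex.ofReal = 0 ↔
      (fun i => (u i).re) ᵥ* B = 0 ∧ (fun i => (u i).im) ᵥ* B = 0 := by
  have hre : ∀ j, ((u ᵥ* B.map Complex.ofReal) j).re = ((fun i => (u i).re) ᵥ* B) j := by
    simp [vecMul, dotProduct]
  have him : ∀ j, ((u ᵥ* B.map Complex.ofReal) j).im = ((fun i => (u i).im) ᵥ* B) j := by
    simp [vecMul, dotProduct]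
  simp only [funext_iff, Complex.ext_iff, hre, him, Pi.zero_apply, Complex.zero_re,
    Complex.zero_im, forall_and]

theorem vecMul_map_ofReal_eq_zero_iff_of_mul_transpose_eq_integral [Fintype κ] [Fintype ν]
    {a b : ℝ} (hab : a < b) {A : ℝ → Matrix ι κ ℝ} (hA : Continuous A) {D : Matrix ι ν ℝ}
    (hD : D * Dᵀ = of fun i j => ∫ s in a..b, (A s * (A s)ᵀ) i j) (u : ι → ℂ) :
    u ᵥ* D.map Complex.ofReal = 0 ↔ ∀ s ∈ Icc a b, u ᵥ* (A s).map Complex.ofReal = 0 := by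
  simp only [vecMul_map_ofReal_eq_zero_iff,
    vecMul_eq_zero_iff_of_mul_transpose_eq_integral hab hA hD, imp_and, forall_and]

end Gramian

theorem Matrix.map_ofReal_mul {l m n : Type*} [Fintype m] (A : Matrix l m ℝ)
    (B : Matrix m n ℝ) :
    (A * B).map Complex.ofReal = A.map Complex.ofReal * B.map Complex.ofReal :=
  Matrix.map_mul (f := Complex.ofRealHom)

theorem forall_mem_Icc_add_iff_forall {P : ℝ → Prop} {T : ℝ} (hT : 0 < T)
    (hP : ∀ s, P (s + T) ↔ P s) (a : ℝ) : (∀ s ∈ Icc a (a + T), P s) ↔ ∀ s, P s := by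
  refine ⟨fun h s => ?_, fun h s _ => h s⟩
  obtain ⟨y, hy, hsy⟩ := Function.Periodic.exists_mem_Ico (fun s => propext (hP s)) hT s a
  exact hsy ▸ h y (Ico_subset_Icc_self hy)

section LeftEigenvectors

variable {ι κ K : Type*} [Fintype ι] [DecidableEq ι] [Field K]

theorem vecMul_ne_zero_of_mul_eq_one {P Q : Matrix ι ι K} (hPQ : P * Q = 1) {u : ι → K}
    (hu : u ≠ 0) : u ᵥ* P ≠ 0 := fun h => hu <| by
  rw [← vecMul_one u, ← hPQ, ← vecMul_vecMul, h, zero_vecMul]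

theorem ne_zero_of_vecMul_eq_smul {F G : Matrix ι ι K} (hFG : F * G = 1) {u : ι → K} {μ : K}
    (hu : u ≠ 0) (h : u ᵥ* F = μ • u) : μ ≠ 0 := by
  rintro rfl
  exact vecMul_ne_zero_of_mul_eq_one hFG hu (h.trans (zero_smul K u))

theorem exists_vecMul_eq_smul_iff_of_mul_eq {F G P Q : Matrix ι ι K} (hPQ : P * Q = 1)
    (hQP : Q * P = 1) (h : P * G = F * P) (p : (ι → K) → Prop) :
    (∃ v, ∃ μ : K, v ≠ 0 ∧ v ᵥ* G = μ • v ∧ p v) ↔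
      ∃ u, ∃ μ : K, u ≠ 0 ∧ u ᵥ* F = μ • u ∧ p (u ᵥ* P) := by
  have hGQ : G * Q = Q * F := by
    calc G * Q = Q * (P * G) * Q := by rw [← Matrix.mul_assoc, hQP, Matrix.one_mul]
      _ = Q * F := by rw [h, Matrix.mul_assoc, Matrix.mul_assoc, hPQ, Matrix.mul_one]
  constructor
  · rintro ⟨v, μ, hv, heig, hp⟩
    refine ⟨v ᵥ* Q, μ, vecMul_ne_zero_of_mul_eq_one hQP hv, ?_, ?_⟩
    · rw [vecMul_vecMul, ← hGQ, ← vecMul_vecMul, heig, smul_vecMul]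
    · rwa [vecMul_vecMul, hQP, vecMul_one]
  · rintro ⟨u, μ, hu, heig, hp⟩
    refine ⟨u ᵥ* P, μ, vecMul_ne_zero_of_mul_eq_one hPQ hu, ?_, hp⟩
    rw [vecMul_vecMul, h, ← vecMul_vecMul, heig, smul_vecMul]

theorem exists_leftEigenvector_monodromy_iff {T : ℝ} (hT : 0 < T)
    {Ψ : ℝ → ℝ → Matrix ι ι K} (hΨ : ∀ a b c, Ψ a b * Ψ b c = Ψ a c) (hΨone : ∀ a, Ψ a a = 1)
    (hΨper : ∀ a b, Ψ (a + T) (b + T) = Ψ a b) {B : ℝ → Matrix ι κ K}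
    (hB : ∀ s, B (s + T) = B s) (τ₀ : ℝ) :
    (∃ u, ∃ μ : K, u ≠ 0 ∧ u ᵥ* Ψ T 0 = μ • u ∧ ∀ τ ∈ Icc 0 T, u ᵥ* (Ψ 0 τ * B τ) = 0) ↔
      ∃ v, ∃ μ : K, v ≠ 0 ∧ v ᵥ* Ψ (τ₀ + T) τ₀ = μ • v ∧
        ∀ s ∈ Icc τ₀ (τ₀ + T), v ᵥ* (Ψ (τ₀ + T) s * B s) = 0 := by
  have hswap : ∀ a b, Ψ a b * Ψ b a = 1 := fun a b => by rw [hΨ, hΨone]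
  have hframe : ∀ s, Ψ 0 τ₀ * Ψ (τ₀ + T) s = Ψ T s := fun s => by
    have hshift : Ψ (τ₀ + T) T = Ψ τ₀ 0 := by simpa using hΨper τ₀ 0
    rw [← hΨ (τ₀ + T) T s, ← Matrix.mul_assoc, hshift, hswap, Matrix.one_mul]
  have hsim : Ψ 0 τ₀ * Ψ (τ₀ + T) τ₀ = Ψ T 0 * Ψ 0 τ₀ := by rw [hframe, hΨ]
  rw [exists_vecMul_eq_smul_iff_of_mul_eq (hswap 0 τ₀) (hswap τ₀ 0) hsim]
  refine exists_congr fun u => exists_congr fun μ =>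
    and_congr_right fun hu => and_congr_right fun heig => ?_
  have hμ : μ ≠ 0 := ne_zero_of_vecMul_eq_smul (hswap T 0) hu heig
  have hmonodromy : ∀ s, u ᵥ* (Ψ T s * B s) = μ • u ᵥ* (Ψ 0 s * B s) := fun s => by
    rw [← hΨ T 0 s, Matrix.mul_assoc, ← vecMul_vecMul, heig, smul_vecMul]
  have hzeros : ∀ s, u ᵥ* (Ψ 0 (s + T) * B (s + T)) = 0 ↔ u ᵥ* (Ψ 0 s * B s) = 0 := fun s => by
    rw [← smul_eq_zero_iff_right hμ, ← hmonodromy, hB, ← hΨper 0 s, zero_add]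
  have hperiodic :=
    forall_mem_Icc_add_iff_forall (P := fun s => u ᵥ* (Ψ 0 s * B s) = 0) hT hzeros
  have hperiodic₀ := hperiodic 0
  rw [zero_add] at hperiodic₀
  simp only [vecMul_vecMul, ← Matrix.mul_assoc, hframe, hmonodromy, smul_eq_zero_iff_right hμ]
  rw [hperiodic₀, hperiodic]

end LeftEigenvectors

theorem stmt_6_general (n m k : ℕ) (T : ℝ) (hT : 0 < T)
    (M : ℝ → Matrix (Fin n) (Fin n) ℝ) (N : ℝ → Matrix (Fin n) (Fin m) ℝ)
    (hM : ∀ i j, Continuous fun τ => M τ i j)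
    (hMper : ∀ τ, M (τ + T) = M τ)
    (hN : ∀ i j, Continuous fun τ => N τ i j)
    (hNper : ∀ τ, N (τ + T) = N τ)
    (Φ : ℝ → ℝ → Matrix (Fin n) (Fin n) ℝ)
    (hΦinit : ∀ s, Φ s s = 1)
    (hΦode : ∀ s τ, ∀ i j, HasDerivAt (fun t => Φ t s i j) ((M τ * Φ τ s) i j) τ)
    (τ₀ : ℝ)
    (D : Matrix (Fin n) (Fin k) ℝ)
    (hD : D * Dᵀ = Matrix.of fun i j =>
      ∫ s in τ₀..(τ₀ + T), (Φ (τ₀ + T) s * N s * (N s)ᵀ * (Φ (τ₀ + T) s)ᵀ) i j) :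
    PerControllable T (fun τ => Φ τ 0) N ↔ CtrlPair (Φ (τ₀ + T) τ₀) D := by
  have hMc : Continuous M := continuous_matrix hM
  have hΦ : IsStateTransition M Φ := ⟨hΦinit, fun s t => hasDerivAt_matrix.2 (hΦode s t)⟩
  have hA : Continuous fun s => Φ (τ₀ + T) s * N s :=
    (hΦ.continuous_right hMc _).matrix_mul (continuous_matrix hN)
  have hD' : D * Dᵀ = of fun i j =>
      ∫ s in τ₀..(τ₀ + T), ((Φ (τ₀ + T) s * N s) * (Φ (τ₀ + T) s * N s)ᵀ) i j := by
    simp only [hD, transpose_mul, Matrix.mul_assoc]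
  have hgram := vecMul_map_ofReal_eq_zero_iff_of_mul_transpose_eq_integral
    (lt_add_of_pos_right τ₀ hT) hA hD'
  unfold PerControllable CtrlPair
  simp only [hgram, hΦ.inv_eq hMc, Matrix.map_ofReal_mul, not_iff_not]
  exact exists_leftEigenvector_monodromy_iff hT (Ψ := fun a b => (Φ a b).map Complex.ofReal)
    (fun a b c => by simp only [← Matrix.map_ofReal_mul, hΦ.mul_eq hMc])
    (fun a => by simp [hΦ.self_eq_one])
    (fun a b => by simp only [hΦ.add_period hMc hMper])
    (fun s => by simp only [hNper]) τ₀

/-- Proposition 9 in Bolzern–Colaneri. For continuous `T`-periodic `M, N`,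
`τ₀ ∈ [0,T)` and any real matrix `D` with
`D Dᵀ = ∫_{τ₀}^{τ₀+T} Φ_M(τ₀+T,s) N(s) N(s)ᵀ Φ_M(τ₀+T,s)ᵀ ds`, the pair `(M(·), N(·))` is
controllable iff the time-invariant pair `(Φ̄_M(τ₀), D)` is controllable.
Here `Φ τ s` denotes the state transition matrix `Φ_M(τ, s)`. -/
theorem stmt_6 (n m k : ℕ) (T : ℝ) (hT : 0 < T)
    (M : ℝ → Matrix (Fin n) (Fin n) ℝ) (N : ℝ → Matrix (Fin n) (Fin m) ℝ)
    (hM : ∀ i j, Continuous fun τ => M τ i j)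
    (hMper : ∀ τ, M (τ + T) = M τ)
    (hN : ∀ i j, Continuous fun τ => N τ i j)
    (hNper : ∀ τ, N (τ + T) = N τ)
    (Φ : ℝ → ℝ → Matrix (Fin n) (Fin n) ℝ)
    (hΦinit : ∀ s, Φ s s = 1)
    (hΦode : ∀ s τ, ∀ i j, HasDerivAt (fun t => Φ t s i j) ((M τ * Φ τ s) i j) τ)
    (τ₀ : ℝ) (hτ₀ : τ₀ ∈ Set.Ico (0:ℝ) T)
    (D : Matrix (Fin n) (Fin k) ℝ)
    (hD : D * Dᵀ = Matrix.of fun i j =>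
      ∫ s in τ₀..(τ₀ + T), (Φ (τ₀ + T) s * N s * (N s)ᵀ * (Φ (τ₀ + T) s)ᵀ) i j) :
    PerControllable T (fun τ => Φ τ 0) N ↔ CtrlPair (Φ (τ₀ + T) τ₀) D :=
  stmt_6_general n m k T hT M N hM hMper hN hNper Φ hΦinit hΦode τ₀ D hD
end

section
/- Let b : ℝ^d → ℝ^d be continuously differentiable, let γ : ℝ → ℝ^d be a T-periodic solution of γ̇(τ) = b(γ(τ)) with γ̇(τ) ≠ 0 for all τ. Let λ : ℝ → ℝ be a differentiable T-periodic nowhere-zero scalar function, and let E : ℝ → Mat(d×d, ℝ) be a differentiable T-periodic matrix-valued function such that E(τ) is invertible for all τ and the first column of E(τ) equals λ(τ)γ̇(τ). Set Ω(τ) := E(τ)⁻¹Ė(τ), M(τ) := E(τ)⁻¹ ∂ₓb(γ(τ)) E(τ) − Ω(τ), and let M̃(τ) be the (d−1)×(d−1) submatrix of M(τ) obtained by deleting its first row and first column. Then the characteristic polynomial of the monodromy matrix Φ_{∂ₓb(γ(·))}(T,0) equals (X − 1) times the characteristic polynomial of Φ_{M̃}(T,0); in particular the eigenvalues of Φ_{∂ₓb(γ(·))}(T,0)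 consist of 1 together with the eigenvalues of Φ_{M̃}(T,0), and hence M̃(·) is asymptotically stable if and only if the nontrivial characteristic multipliers of the first-variation equation ẏ = ∂ₓb(γ(τ))y all lie inside the open unit disk. -/
/-!
The velocity `φ = b ∘ γ` solves the first-variation equation, so `Φ_J(τ) φ(0) = φ(τ)`. Passing to
the moving frame, `W(τ) = E(τ)⁻¹ Φ_J(τ) E(0)` solves `Ẇ = M W`, `W(0) = 1`, and since the first
column of `E` is `λ φ`, the first column of `W(τ)` is `(λ(0)/λ(τ)) e₀` while the first column of
`M` vanishes below the diagonal. So `W` is block upper triangular and its lower-right block solves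
`Ẇ₂₂ = M̃ W₂₂`; as it is invertible, it coincides with `Φ_M̃` (no uniqueness theorem for `M̃`, which
need not be continuous, is required: `W₂₂⁻¹ Φ_M̃` has zero derivative). Finally `W(T)` is conjugate
to `Φ_J(T)` by periodicity of `E`, and `W(T)₀₀ = 1` by periodicity of `λ`.
-/

open Matrix Polynomial Set

namespace Matrix

section Calculus

variable {l m n : Type*}

/-- Matrices carry no canonical norm, so matrix-valued curves are differentiated entrywise. -/
def HasEntrywiseDerivAt (A : ℝ → Matrix l m ℝ) (A' : Matrix l m ℝ) (τ : ℝ) : Prop :=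
  ∀ i j, HasDerivAt (fun t => A t i j) (A' i j) τ

theorem hasEntrywiseDerivAt_const (A : Matrix l m ℝ) (τ : ℝ) :
    HasEntrywiseDerivAt (fun _ => A) 0 τ :=
  fun i j => hasDerivAt_const τ (A i j)

theorem HasEntrywiseDerivAt.unique {A : ℝ → Matrix l m ℝ} {A' A'' : Matrix l m ℝ} {τ : ℝ}
    (h' : HasEntrywiseDerivAt A A' τ) (h'' : HasEntrywiseDerivAt A A'' τ) : A' = A'' :=
  ext fun i j => (h' i j).unique (h'' i j)

theorem HasEntrywiseDerivAt.mul [Fintype m] {A : ℝ → Matrix l m ℝ} {B : ℝ → Matrix m n ℝ}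
    {A' : Matrix l m ℝ} {B' : Matrix m n ℝ} {τ : ℝ}
    (hA : HasEntrywiseDerivAt A A' τ) (hB : HasEntrywiseDerivAt B B' τ) :
    HasEntrywiseDerivAt (fun t => A t * B t) (A' * B τ + A τ * B') τ := by
  intro i j
  simp only [add_apply, mul_apply, ← Finset.sum_add_distrib]
  exact HasDerivAt.fun_sum fun q _ => (hA i q).mul (hB q j)

theorem HasEntrywiseDerivAt.mulVec [Fintype m] {A : ℝ → Matrix l m ℝ} {x : ℝ → m → ℝ}
    {A' : Matrix l m ℝ} {x' : m → ℝ} {τ : ℝ}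
    (hA : HasEntrywiseDerivAt A A' τ) (hx : HasDerivAt x x' τ) :
    HasDerivAt (fun t => A t *ᵥ x t) (A' *ᵥ x τ + A τ *ᵥ x') τ := by
  refine hasDerivAt_pi.2 fun i => ?_
  show HasDerivAt (fun t => ∑ q, A t i q * x t q) (∑ q, A' i q * x τ q + ∑ q, A τ i q * x' q) τ
  rw [← Finset.sum_add_distrib]
  exact HasDerivAt.fun_sum fun q _ => (hA i q).mul (hasDerivAt_pi.1 hx q)

theorem HasEntrywiseDerivAt.hasDerivAt_mulVec_const [Fintype m] {Φ : ℝ → Matrix m m ℝ}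
    {A : Matrix m m ℝ} {t : ℝ} (hΦ : HasEntrywiseDerivAt Φ (A * Φ t) t) (v : m → ℝ) :
    HasDerivAt (fun s => Φ s *ᵥ v) (A *ᵥ (Φ t *ᵥ v)) t := by
  simpa [mulVec_mulVec] using hΦ.mulVec (hasDerivAt_const t v)

end Calculus

section Inverse

variable {n : Type*} [Fintype n] [DecidableEq n]

theorem differentiableAt_det {A : ℝ → Matrix n n ℝ} {τ : ℝ}
    (hA : ∀ i j, DifferentiableAt ℝ (fun t => A t i j) τ) :
    DifferentiableAt ℝ (fun t => (A t).det) τ := by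
  simp only [det_apply, Units.smul_def, zsmul_eq_mul]
  exact DifferentiableAt.fun_sum fun σ _ => (DifferentiableAt.fun_finsetProd
    fun i _ => hA (σ i) i).const_mul _

theorem differentiableAt_inv_apply {A : ℝ → Matrix n n ℝ} {τ : ℝ}
    (hA : ∀ i j, DifferentiableAt ℝ (fun t => A t i j) τ) (hdet : IsUnit (A τ).det) (i j : n) :
    DifferentiableAt ℝ (fun t => (A t)⁻¹ i j) τ := by
  simp only [inv_def, Ring.inverse_eq_inv', smul_apply, smul_eq_mul, adjugate_apply]
  refine ((differentiableAt_det hA).inv hdet.ne_zero).mul (differentiableAt_det fun a c => ?_)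
  rcases eq_or_ne a j with rfl | h
  · simp only [updateRow_self]
    exact differentiableAt_const _
  · simpa only [updateRow_ne h] using hA a c

theorem HasEntrywiseDerivAt.inv {A : ℝ → Matrix n n ℝ} {A' : Matrix n n ℝ} {τ : ℝ}
    (hA : HasEntrywiseDerivAt A A' τ) (hdet : ∀ t, IsUnit (A t).det) :
    HasEntrywiseDerivAt (fun t => (A t)⁻¹) (-((A τ)⁻¹ * A' * (A τ)⁻¹)) τ := by
  set D : Matrix n n ℝ := fun i j => deriv (fun t => (A t)⁻¹ i j) τ
  have hD : HasEntrywiseDerivAt (fun t => (A t)⁻¹) D τ := fun i j =>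
    (differentiableAt_inv_apply (fun i j => (hA i j).differentiableAt) (hdet τ) i j).hasDerivAt
  have hprod : D * A τ + (A τ)⁻¹ * A' = 0 := by
    refine (hD.mul hA).unique fun i j => ?_
    simp only [nonsing_inv_mul _ (hdet _), zero_apply]
    exact hasDerivAt_const τ _
  rw [← eq_neg_iff_add_eq_zero] at hprod
  rwa [← neg_mul, ← hprod, mul_assoc, mul_nonsing_inv _ (hdet τ), mul_one]

end Inverse

section Charpoly

variable {R S : Type*} [CommRing R] [CommRing S] {ι κ : Type*} [Fintype ι] [DecidableEq ι]
  [Fintype κ] [DecidableEq κ]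

theorem charpoly_inv_mul_mul (P A : Matrix ι ι R) (hP : IsUnit P.det) :
    (P⁻¹ * A * P).charpoly = A.charpoly := by
  rw [charpoly_mul_comm, ← mul_assoc, mul_nonsing_inv _ hP, one_mul]

theorem charpoly_map_eq_of_charpoly_eq {A : Matrix ι ι R} {B : Matrix κ κ R} {a : R}
    (h : A.charpoly = (X - C a) * B.charpoly) (f : R →+* S) :
    (A.map f).charpoly = (X - C (f a)) * (B.map f).charpoly := by
  rw [charpoly_map, charpoly_map, h, Polynomial.map_mul, Polynomial.map_sub, map_X, map_C]

end Charpoly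

section Block

variable {R : Type*} [CommRing R] {m : ℕ}

theorem det_eq_mul_det_submatrix_succ_of_col_zero (A : Matrix (Fin (m + 1)) (Fin (m + 1)) R)
    (hA : ∀ i : Fin m, A i.succ 0 = 0) :
    A.det = A 0 0 * (A.submatrix Fin.succ Fin.succ).det := by
  simp [det_succ_column_zero A, Fin.sum_univ_succ, hA]

theorem isUnit_det_submatrix_succ_of_col_zero {A : Matrix (Fin (m + 1)) (Fin (m + 1)) R}
    (hdet : IsUnit A.det) (hA : ∀ i : Fin m, A i.succ 0 = 0) :
    IsUnit (A.submatrix Fin.succ Fin.succ).det := by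
  rw [det_eq_mul_det_submatrix_succ_of_col_zero A hA] at hdet
  exact isUnit_of_mul_isUnit_right hdet

theorem charpoly_eq_mul_charpoly_submatrix_succ_of_col_zero
    (A : Matrix (Fin (m + 1)) (Fin (m + 1)) R) (hA : ∀ i : Fin m, A i.succ 0 = 0) :
    A.charpoly = (X - C (A 0 0)) * (A.submatrix Fin.succ Fin.succ).charpoly := by
  have hsub : (charmatrix A).submatrix Fin.succ Fin.succ =
      charmatrix (A.submatrix Fin.succ Fin.succ) := by
    ext i j
    rcases eq_or_ne i j with rfl | h
    · simp
    · simp [charmatrix_apply_ne _ _ _ h, charmatrix_apply_ne _ _ _ (Fin.succ_injective _ |>.ne h)]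
  rw [charpoly, det_eq_mul_det_submatrix_succ_of_col_zero _ fun i => by simp [hA], hsub,
    charmatrix_apply_eq]
  rfl

theorem HasEntrywiseDerivAt.submatrix_succ {W : ℝ → Matrix (Fin (m + 1)) (Fin (m + 1)) ℝ}
    {A : Matrix (Fin (m + 1)) (Fin (m + 1)) ℝ} {τ : ℝ} (hW : HasEntrywiseDerivAt W (A * W τ) τ)
    (hA : ∀ i : Fin m, A i.succ 0 = 0) :
    HasEntrywiseDerivAt (fun t => (W t).submatrix Fin.succ Fin.succ)
      (A.submatrix Fin.succ Fin.succ * (W τ).submatrix Fin.succ Fin.succ) τ := by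
  intro i j
  refine (hW i.succ j.succ).congr_deriv ?_
  rw [mul_apply, Fin.sum_univ_succ, hA, zero_mul, zero_add]
  rfl

end Block

end Matrix

section Spectrum

variable {K : Type*} [Field K] {ι κ : Type*} [Fintype ι] [DecidableEq ι] [Fintype κ]
  [DecidableEq κ] {A : Matrix ι ι K} {B : Matrix κ κ K}

theorem spectrum_eq_insert_of_charpoly_eq (a : K) (h : A.charpoly = (X - C a) * B.charpoly) :
    spectrum K A = insert a (spectrum K B) := by
  ext μ
  simp [mem_spectrum_iff_isRoot_charpoly, h, sub_eq_zero]

theorem roots_charpoly_erase_of_charpoly_eq [DecidableEq K] (a : K)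
    (h : A.charpoly = (X - C a) * B.charpoly) : A.charpoly.roots.erase a = B.charpoly.roots := by
  rw [h, roots_mul (mul_ne_zero (X_sub_C_ne_zero a) B.charpoly_monic.ne_zero), roots_X_sub_C,
    Multiset.singleton_add, Multiset.erase_cons_head]

end Spectrum

section LinearODE

variable {n : Type*} [Fintype n]

theorem linearODE_eq_of_continuous {A : ℝ → Matrix n n ℝ}
    (hA : ∀ i j, Continuous fun t => A t i j) {f g : ℝ → n → ℝ} {t₀ : ℝ}
    (hf : ∀ t, HasDerivAt f (A t *ᵥ f t) t) (hg : ∀ t, HasDerivAt g (A t *ᵥ g t) t)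
    (h : f t₀ = g t₀) : f = g := by
  let _ : NormedAddCommGroup (Matrix n n ℝ) := Matrix.linftyOpNormedAddCommGroup
  funext τ
  set a := min τ t₀ - 1
  set b := max τ t₀ + 1
  have hAc : Continuous A := continuous_pi fun i => continuous_pi fun j => hA i j
  obtain ⟨C, hC⟩ := (isCompact_Icc (a := a) (b := b)).exists_bound_of_continuousOn
    hAc.continuousOn
  have hlip : ∀ t ∈ Ioo a b, LipschitzOnWith C.toNNReal (A t *ᵥ ·) univ := by
    refine fun t ht => (LipschitzWith.of_dist_le_mul fun x y => ?_).lipschitzOnWith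
    rw [dist_eq_norm, dist_eq_norm, ← mulVec_sub]
    exact (linfty_opNorm_mulVec _ _).trans (mul_le_mul_of_nonneg_right
      ((hC t (Ioo_subset_Icc_self ht)).trans (Real.le_coe_toNNReal C)) (norm_nonneg _))
  refine ODE_solution_unique_of_mem_Icc hlip (t₀ := t₀) ⟨?_, ?_⟩
    (fun t _ => (hf t).continuousAt.continuousWithinAt) (fun t _ => hf t) (fun _ _ => trivial)
    (fun t _ => (hg t).continuousAt.continuousWithinAt) (fun t _ => hg t) (fun _ _ => trivial)
    h ⟨?_, ?_⟩ <;> grind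

variable [DecidableEq n] {A Φ : ℝ → Matrix n n ℝ}

theorem mulVec_eq_of_fundamental (hA : ∀ i j, Continuous fun t => A t i j)
    (hΦ : ∀ t, HasEntrywiseDerivAt Φ (A t * Φ t) t) (hΦ0 : Φ 0 = 1) {f : ℝ → n → ℝ}
    (hf : ∀ t, HasDerivAt f (A t *ᵥ f t) t) (τ : ℝ) : Φ τ *ᵥ f 0 = f τ := by
  refine congrFun (linearODE_eq_of_continuous hA (t₀ := 0)
    (fun t => (hΦ t).hasDerivAt_mulVec_const (f 0)) hf ?_) τ
  simp [hΦ0]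

theorem isUnit_det_of_fundamental (hA : ∀ i j, Continuous fun t => A t i j)
    (hΦ : ∀ t, HasEntrywiseDerivAt Φ (A t * Φ t) t) (hΦ0 : Φ 0 = 1) (τ : ℝ) :
    IsUnit (Φ τ).det := by
  rw [← isUnit_iff_isUnit_det, ← mulVec_injective_iff_isUnit]
  intro x y hxy
  simpa [hΦ0] using congrFun (linearODE_eq_of_continuous hA
    (fun t => (hΦ t).hasDerivAt_mulVec_const x) (fun t => (hΦ t).hasDerivAt_mulVec_const y) hxy) 0

theorem eq_of_fundamental_of_isUnit_det {X : ℝ → Matrix n n ℝ}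
    (hΦ : ∀ t, HasEntrywiseDerivAt Φ (A t * Φ t) t) (hΦdet : ∀ t, IsUnit (Φ t).det)
    (hX : ∀ t, HasEntrywiseDerivAt X (A t * X t) t) {t₀ : ℝ} (h : X t₀ = Φ t₀) : X = Φ := by
  have hconst : ∀ t, HasEntrywiseDerivAt (fun s => (Φ s)⁻¹ * X s) 0 t := by
    intro t
    convert ((hΦ t).inv hΦdet).mul (hX t) using 1
    rw [mul_assoc, mul_assoc, mul_nonsing_inv _ (hΦdet t), mul_one, neg_mul, mul_assoc,
      neg_add_cancel]
  funext τ
  have hτ : (Φ τ)⁻¹ * X τ = 1 := by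
    ext i j
    have := is_const_of_deriv_eq_zero (fun s => ((hconst s) i j).differentiableAt)
      (fun s => ((hconst s) i j).deriv) τ t₀
    simpa [h, nonsing_inv_mul _ (hΦdet t₀)] using this
  rw [← mul_nonsing_inv_cancel_left _ (X τ) (hΦdet τ), hτ, mul_one]

end LinearODE

/-- The matrix `M = E⁻¹ J E - Ω`, `Ω = E⁻¹ Ė`, of the first-variation equation in the
coordinates `z = E⁻¹ y`. -/
noncomputable def coeffInFrame {n : Type*} [Fintype n] [DecidableEq n] (E E' J : Matrix n n ℝ) :
    Matrix n n ℝ :=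
  E⁻¹ * J * E - E⁻¹ * E'

section MovingFrame

variable {n : ℕ} {E : ℝ → Matrix (Fin (n + 1)) (Fin (n + 1)) ℝ} {l : ℝ → ℝ}
  {φ : ℝ → Fin (n + 1) → ℝ}

theorem mulVec_single_zero_of_col (hcol : ∀ t i, E t i 0 = l t * φ t i) (t : ℝ) :
    E t *ᵥ Pi.single 0 1 = l t • φ t := by
  ext i
  simp [hcol]

theorem coeffInFrame_apply_succ_zero {J E' : Matrix (Fin (n + 1)) (Fin (n + 1)) ℝ} {l' τ : ℝ}
    (hE : HasEntrywiseDerivAt E E' τ) (hdet : IsUnit (E τ).det) (hl : HasDerivAt l l' τ)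
    (hl0 : l τ ≠ 0) (hφ : HasDerivAt φ (J *ᵥ φ τ) τ) (hcol : ∀ t i, E t i 0 = l t * φ t i)
    (i : Fin n) : coeffInFrame (E τ) E' J i.succ 0 = 0 := by
  set u : Fin (n + 1) → ℝ := Pi.single 0 1
  have hEu := mulVec_single_zero_of_col hcol
  have hE'u : E' *ᵥ u = l' • φ τ + l τ • (J *ᵥ φ τ) := by
    ext j
    have hEj := hE j 0
    rw [show (fun t => E t j 0) = fun t => l t * φ t j from funext fun t => hcol t j] at hEj
    simp [u, hEj.unique (hl.fun_mul (hasDerivAt_pi.1 hφ j))]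
  have hEM : E τ * coeffInFrame (E τ) E' J = J * E τ - E' := by
    rw [coeffInFrame, mul_sub, ← mul_assoc, ← mul_assoc, ← mul_assoc, mul_nonsing_inv _ hdet,
      one_mul, one_mul]
  -- `E (M u) = J (l φ) - (l' φ + l J φ) = -l' φ = E (-(l' / l) u)`
  have hMu : coeffInFrame (E τ) E' J *ᵥ u = (-(l' / l τ)) • u := by
    apply mulVec_injective_of_isUnit ((isUnit_iff_isUnit_det _).2 hdet)
    rw [mulVec_mulVec, hEM, sub_mulVec, ← mulVec_mulVec, hEu, hE'u, mulVec_smul, mulVec_smul,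
      hEu, smul_smul, neg_mul, div_mul_cancel₀ _ hl0, neg_smul]
    abel
  simpa [u, mulVec_single_one] using congrFun hMu i.succ

theorem hasEntrywiseDerivAt_inv_mul_mul {Φ : ℝ → Matrix (Fin (n + 1)) (Fin (n + 1)) ℝ}
    {E' J : Matrix (Fin (n + 1)) (Fin (n + 1)) ℝ} {τ : ℝ} (hE : HasEntrywiseDerivAt E E' τ)
    (hdet : ∀ t, IsUnit (E t).det) (hΦ : HasEntrywiseDerivAt Φ (J * Φ τ) τ)
    (C : Matrix (Fin (n + 1)) (Fin (n + 1)) ℝ) :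
    HasEntrywiseDerivAt (fun t => (E t)⁻¹ * Φ t * C)
      (coeffInFrame (E τ) E' J * ((E τ)⁻¹ * Φ τ * C)) τ := by
  convert ((hE.inv hdet).mul hΦ).mul (hasEntrywiseDerivAt_const C τ) using 1
  simp only [coeffInFrame, mul_zero, add_zero, sub_mul, add_mul, neg_mul, mul_assoc,
    mul_nonsing_inv_cancel_left _ _ (hdet τ)]
  abel

theorem inv_mul_mul_mulVec_single_zero {Φ : ℝ → Matrix (Fin (n + 1)) (Fin (n + 1)) ℝ}
    (hcol : ∀ t i, E t i 0 = l t * φ t i) {t : ℝ} (hdet : IsUnit (E t).det) (hl0 : l t ≠ 0)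
    (hΦ : Φ t *ᵥ φ 0 = φ t) :
    ((E t)⁻¹ * Φ t * E 0) *ᵥ Pi.single 0 1 = (l 0 / l t) • Pi.single 0 1 := by
  have hφt : l 0 • φ t = (l 0 / l t) • (E t *ᵥ Pi.single 0 1) := by
    rw [mulVec_single_zero_of_col hcol, smul_smul, div_mul_cancel₀ _ hl0]
  rw [← mulVec_mulVec, ← mulVec_mulVec, mulVec_single_zero_of_col hcol, mulVec_smul, hΦ, hφt,
    mulVec_smul, mulVec_mulVec, nonsing_inv_mul _ hdet, one_mulVec]

end MovingFrame

theorem stmt_7_general (n : ℕ) (T : ℝ)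
    (b : (Fin (n + 1) → ℝ) → (Fin (n + 1) → ℝ))
    (J : ℝ → Matrix (Fin (n + 1)) (Fin (n + 1)) ℝ)
    (γ : ℝ → Fin (n + 1) → ℝ)
    (hγ : ∀ τ, HasDerivAt γ (b (γ τ)) τ)
    (hb : ∀ τ, HasFDerivAt b (LinearMap.toContinuousLinearMap
      (Matrix.mulVecLin (J τ))) (γ τ))
    (hJcont : ∀ i j, Continuous fun τ => J τ i j)
    (l : ℝ → ℝ) (hl : Differentiable ℝ l)
    (hlper : ∀ τ, l (τ + T) = l τ) (hlne : ∀ τ, l τ ≠ 0)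
    (E E' : ℝ → Matrix (Fin (n + 1)) (Fin (n + 1)) ℝ)
    (hE : ∀ τ i j, HasDerivAt (fun t => E t i j) (E' τ i j) τ)
    (hEper : ∀ τ, E (τ + T) = E τ)
    (hEinv : ∀ τ, IsUnit (E τ).det)
    (hEcol : ∀ τ i, E τ i 0 = l τ * b (γ τ) i)
    (Mt : ℝ → Matrix (Fin n) (Fin n) ℝ)
    (hMt : ∀ τ, Mt τ =
      ((E τ)⁻¹ * J τ * E τ - (E τ)⁻¹ * E' τ).submatrix Fin.succ Fin.succ)
    (ΦJ : ℝ → Matrix (Fin (n + 1)) (Fin (n + 1)) ℝ)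
    (hΦJ0 : ΦJ 0 = 1)
    (hΦJ : ∀ τ i j, HasDerivAt (fun t => ΦJ t i j) ((J τ * ΦJ τ) i j) τ)
    (ΦM : ℝ → Matrix (Fin n) (Fin n) ℝ)
    (hΦM0 : ΦM 0 = 1)
    (hΦM : ∀ τ i j, HasDerivAt (fun t => ΦM t i j) ((Mt τ * ΦM τ) i j) τ) :
    (ΦJ T).charpoly = (Polynomial.X - 1) * (ΦM T).charpoly ∧
    spectrum ℂ ((ΦJ T).map Complex.ofReal) =
      insert (1 : ℂ) (spectrum ℂ ((ΦM T).map Complex.ofReal)) ∧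
    ((∀ μ ∈ spectrum ℂ ((ΦM T).map Complex.ofReal), ‖μ‖ < 1) ↔
      (∀ μ ∈ (((ΦJ T).map Complex.ofReal).charpoly.roots.erase 1), ‖μ‖ < 1)) := by
  have hφ : ∀ τ, HasDerivAt (fun t => b (γ t)) (J τ *ᵥ b (γ τ)) τ := fun τ =>
    (hb τ).comp_hasDerivAt τ (hγ τ)
  set W : ℝ → Matrix (Fin (n + 1)) (Fin (n + 1)) ℝ := fun t => (E t)⁻¹ * ΦJ t * E 0
  have hWcol : ∀ t, W t *ᵥ Pi.single 0 1 = (l 0 / l t) • Pi.single 0 1 := fun t =>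
    inv_mul_mul_mulVec_single_zero hEcol (hEinv t) (hlne t)
      (mulVec_eq_of_fundamental hJcont hΦJ hΦJ0 hφ t)
  have hWsucc : ∀ t (i : Fin n), W t i.succ 0 = 0 := fun t i => by
    simpa [mulVec_single_one] using congrFun (hWcol t) i.succ
  have hΦM_eq : ΦM = fun t => (W t).submatrix Fin.succ Fin.succ := by
    refine eq_of_fundamental_of_isUnit_det (A := Mt) (fun τ => ?_) (fun t => ?_) hΦM (t₀ := 0) ?_
    · rw [hMt]
      exact (hasEntrywiseDerivAt_inv_mul_mul (hE τ) hEinv (hΦJ τ) (E 0)).submatrix_succ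
        (coeffInFrame_apply_succ_zero (hE τ) (hEinv τ) (hl τ).hasDerivAt (hlne τ) (hφ τ) hEcol)
    · refine isUnit_det_submatrix_succ_of_col_zero ?_ (hWsucc t)
      simp only [W, det_mul, det_nonsing_inv]
      exact ((hEinv t).ringInverse.mul (isUnit_det_of_fundamental hJcont hΦJ hΦJ0 t)).mul (hEinv 0)
    · simp [hΦM0, W, hΦJ0, nonsing_inv_mul _ (hEinv 0), submatrix_one _ (Fin.succ_injective _)]
  have hWT : W T 0 0 = 1 := by
    simpa [mulVec_single_one, (by simpa using hlper 0 : l T = l 0), hlne 0] using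
      congrFun (hWcol T) 0
  have hchar : (ΦJ T).charpoly = (X - C 1) * (ΦM T).charpoly := by
    have hconj : W T = (E 0)⁻¹ * ΦJ T * E 0 := by simp [W, (by simpa using hEper 0 : E T = E 0)]
    rw [← charpoly_inv_mul_mul _ _ (hEinv 0), ← hconj,
      charpoly_eq_mul_charpoly_submatrix_succ_of_col_zero _ (hWsucc T), hWT, hΦM_eq]
  have hcharℂ : ((ΦJ T).map Complex.ofReal).charpoly =
      (X - C 1) * ((ΦM T).map Complex.ofReal).charpoly := by
    rw [← map_one Complex.ofRealHom]
    exact charpoly_map_eq_of_charpoly_eq hchar Complex.ofRealHom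
  refine ⟨by simpa using hchar, spectrum_eq_insert_of_charpoly_eq 1 hcharℂ, ?_⟩
  rw [roots_charpoly_erase_of_charpoly_eq 1 hcharℂ]
  simp [mem_roots', mem_spectrum_iff_isRoot_charpoly, (charpoly_monic _).ne_zero]

/-- Along a `T`-periodic solution `γ` of `γ̇ = b(γ)` with nonvanishing
velocity, given a `T`-periodic differentiable invertible moving frame `E` whose first column
is `λ(τ)γ̇(τ)`, set `Ω = E⁻¹Ė`, `M = E⁻¹ ∂ₓb(γ) E - Ω` and let `M̃` be the submatrix of `M`
deleting the first row and column.  Then the characteristic polynomial of the monodromy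
matrix `Φ_{∂ₓb(γ(·))}(T,0)` equals `(X - 1)` times that of `Φ_{M̃}(T,0)`; in particular the
eigenvalues of the former consist of `1` together with the eigenvalues of the latter, and
`M̃(·)` is asymptotically stable iff all nontrivial characteristic multipliers of the
first-variation equation lie inside the open unit disk. -/
theorem stmt_7 (n : ℕ) (T : ℝ) (hT : 0 < T)
    (b : (Fin (n + 1) → ℝ) → (Fin (n + 1) → ℝ))
    (J : ℝ → Matrix (Fin (n + 1)) (Fin (n + 1)) ℝ)
    (γ : ℝ → Fin (n + 1) → ℝ)
    (hγ : ∀ τ, HasDerivAt γ (b (γ τ)) τ)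
    (hγper : ∀ τ, γ (τ + T) = γ τ)
    (hγ' : ∀ τ, b (γ τ) ≠ 0)
    (hb : ∀ τ, HasFDerivAt b (LinearMap.toContinuousLinearMap
      (Matrix.mulVecLin (J τ))) (γ τ))
    (hJcont : ∀ i j, Continuous fun τ => J τ i j)
    (l : ℝ → ℝ) (hl : Differentiable ℝ l)
    (hlper : ∀ τ, l (τ + T) = l τ) (hlne : ∀ τ, l τ ≠ 0)
    (E E' : ℝ → Matrix (Fin (n + 1)) (Fin (n + 1)) ℝ)
    (hE : ∀ τ i j, HasDerivAt (fun t => E t i j) (E' τ i j) τ)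
    (hEper : ∀ τ, E (τ + T) = E τ)
    (hEinv : ∀ τ, IsUnit (E τ).det)
    (hEcol : ∀ τ i, E τ i 0 = l τ * b (γ τ) i)
    (Mt : ℝ → Matrix (Fin n) (Fin n) ℝ)
    (hMt : ∀ τ, Mt τ =
      ((E τ)⁻¹ * J τ * E τ - (E τ)⁻¹ * E' τ).submatrix Fin.succ Fin.succ)
    (ΦJ : ℝ → Matrix (Fin (n + 1)) (Fin (n + 1)) ℝ)
    (hΦJ0 : ΦJ 0 = 1)
    (hΦJ : ∀ τ i j, HasDerivAt (fun t => ΦJ t i j) ((J τ * ΦJ τ) i j) τ)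
    (ΦM : ℝ → Matrix (Fin n) (Fin n) ℝ)
    (hΦM0 : ΦM 0 = 1)
    (hΦM : ∀ τ i j, HasDerivAt (fun t => ΦM t i j) ((Mt τ * ΦM τ) i j) τ) :
    (ΦJ T).charpoly = (Polynomial.X - 1) * (ΦM T).charpoly ∧
    spectrum ℂ ((ΦJ T).map Complex.ofReal) =
      insert (1 : ℂ) (spectrum ℂ ((ΦM T).map Complex.ofReal)) ∧
    ((∀ μ ∈ spectrum ℂ ((ΦM T).map Complex.ofReal), ‖μ‖ < 1) ↔
      (∀ μ ∈ (((ΦJ T).map Complex.ofReal).charpoly.roots.erase 1), ‖μ‖ < 1)) :=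
  stmt_7_general n T b J γ hγ hb hJcont l hl hlper hlne E E' hE hEper hEinv hEcol Mt hMt ΦJ hΦJ0 hΦJ
    ΦM hΦM0 hΦM
end

section
/- Let M, A : [0,T] → ℝ be continuous with A(s) ≥ 0 for all s and ∫₀^T M(s) ds ≠ 0, and define H₀ := [∫₀^T A(s) · exp(2∫_s^T M(σ) dσ) ds] / [1 − exp(2∫₀^T M(s) ds)]. Then H₀ > 0 if and only if both ∫₀^T M(s) ds < 0 and A is not identically zero on [0,T]. -/
open intervalIntegral

/-
The denominator `1 - exp (2 ∫₀^T M)` is positive exactly when `∫₀^T M < 0`, and the numerator is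
the integral of the continuous nonnegative function `A(s) exp(2 ∫_s^T M)`, which vanishes at `s`
exactly when `A` does; such an integral is positive iff the integrand is not identically zero.
Since the numerator is nonnegative, the quotient is positive iff both factors are.
-/

lemma div_pos_iff_of_nonneg_left {α : Type*} [Field α] [LinearOrder α] [IsStrictOrderedRing α]
    {a b : α} (ha : 0 ≤ a) : 0 < a / b ↔ 0 < a ∧ 0 < b := by
  rw [div_pos_iff, or_iff_left fun h => ha.not_gt h.1]

lemma Real.one_sub_exp_pos_iff {x : ℝ} : 0 < 1 - Real.exp x ↔ x < 0 :=
  sub_pos.trans Real.exp_lt_one_iff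

lemma intervalIntegral.integral_pos_iff_exists_ne_zero {f : ℝ → ℝ} {a b : ℝ} (hab : a < b)
    (hfc : ContinuousOn f (Set.Icc a b)) (hf : ∀ x ∈ Set.Icc a b, 0 ≤ f x) :
    0 < ∫ x in a..b, f x ↔ ∃ c ∈ Set.Icc a b, f c ≠ 0 := by
  refine ⟨fun hpos => ?_, fun ⟨c, hc, hfc0⟩ => ?_⟩
  · by_contra! hzero
    have hint_zero : ∫ x in a..b, f x = 0 := by
      rw [integral_congr (g := fun _ => 0) (by rwa [Set.uIcc_of_le hab.le]), integral_zero]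
    exact hpos.ne' hint_zero
  · exact integral_pos hab hfc (fun x hx => hf x (Set.Ioc_subset_Icc_self hx))
      ⟨c, hc, (hf c hc).lt_of_ne' hfc0⟩

lemma continuousOn_mul_exp_integral {A M : ℝ → ℝ} {a b : ℝ} (hab : a ≤ b)
    (hM : ContinuousOn M (Set.Icc a b)) (hA : ContinuousOn A (Set.Icc a b)) (k : ℝ) :
    ContinuousOn (fun s => A s * Real.exp (k * ∫ σ in s..b, M σ)) (Set.Icc a b) := by
  have hprim : ContinuousOn (fun s => ∫ σ in s..b, M σ) (Set.Icc a b) := by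
    rw [← Set.uIcc_of_le hab] at hM ⊢
    exact continuousOn_primitive_interval_left (hM.integrableOn_compact isCompact_uIcc)
  exact hA.mul (Real.continuous_exp.comp_continuousOn (continuousOn_const.mul hprim))

theorem stmt_15_general (T : ℝ) (hT : 0 < T) (M A : ℝ → ℝ)
    (hM : ContinuousOn M (Set.Icc 0 T)) (hA : ContinuousOn A (Set.Icc 0 T))
    (hA0 : ∀ s ∈ Set.Icc (0:ℝ) T, 0 ≤ A s) :
    0 < (∫ s in (0:ℝ)..T, A s * Real.exp (2 * ∫ σ in s..T, M σ)) /
        (1 - Real.exp (2 * ∫ s in (0:ℝ)..T, M s)) ↔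
      ((∫ s in (0:ℝ)..T, M s) < 0 ∧ ∃ s ∈ Set.Icc (0:ℝ) T, A s ≠ 0) := by
  have hweight_nonneg : ∀ s ∈ Set.Icc (0:ℝ) T, 0 ≤ A s * Real.exp (2 * ∫ σ in s..T, M σ) :=
    fun s hs => mul_nonneg (hA0 s hs) (Real.exp_pos _).le
  have hnum : 0 < (∫ s in (0:ℝ)..T, A s * Real.exp (2 * ∫ σ in s..T, M σ)) ↔
      ∃ s ∈ Set.Icc (0:ℝ) T, A s ≠ 0 := by
    simp only [integral_pos_iff_exists_ne_zero hT (continuousOn_mul_exp_integral hT.le hM hA 2)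
      hweight_nonneg, ne_eq, mul_eq_zero, Real.exp_ne_zero, or_false]
  have hden : 0 < 1 - Real.exp (2 * ∫ s in (0:ℝ)..T, M s) ↔ (∫ s in (0:ℝ)..T, M s) < 0 := by
    rw [Real.one_sub_exp_pos_iff]
    constructor <;> intro h <;> linarith
  rw [div_pos_iff_of_nonneg_left (integral_nonneg hT.le hweight_nonneg), hnum, hden, and_comm]

/-- For continuous `M, A` on `[0,T]` with `A ≥ 0` and `∫₀^T M ≠ 0`, the
initial value `H₀ = (∫₀^T A(s) exp(2∫_s^T M) ds) / (1 - exp(2∫₀^T M))` of the periodic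
solution of the scalar Lyapunov equation is positive iff `∫₀^T M < 0` and `A` is not
identically zero on `[0,T]`. -/
theorem stmt_15 (T : ℝ) (hT : 0 < T) (M A : ℝ → ℝ)
    (hM : ContinuousOn M (Set.Icc 0 T)) (hA : ContinuousOn A (Set.Icc 0 T))
    (hA0 : ∀ s ∈ Set.Icc (0:ℝ) T, 0 ≤ A s)
    (hMint : (∫ s in (0:ℝ)..T, M s) ≠ 0) :
    0 < (∫ s in (0:ℝ)..T, A s * Real.exp (2 * ∫ σ in s..T, M σ)) /
        (1 - Real.exp (2 * ∫ s in (0:ℝ)..T, M s)) ↔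
      ((∫ s in (0:ℝ)..T, M s) < 0 ∧ ∃ s ∈ Set.Icc (0:ℝ) T, A s ≠ 0) :=
  stmt_15_general T hT M A hM hA hA0
end
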